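/- Fix n ≥ 2 and k ≥ 1, and let (k) denote the one-row partition. For every permutation w ∈ S_n and every reduced word (i_1,…,i_ℓ) of w, the β-character of the K-Demazure crystal equals the Lascoux polynomial: Σ_{T ∈ SVT^n_{(i_1,…,i_ℓ)}((k))} β^{excess(T)} x^{wt(T)} = ϖ_{i_1} ϖ_{i_2} ⋯ ϖ_{i_ℓ}( x_1^k ) in ℤ[β][x_1,…,x_n]. In particular, for any reduced word of the longest element w_0 of S_n, SVT^n_{w_0}((k)) = SVT^n((k)) and ϖ_{w_0}(x_1^k) = 𝔊_{(k)}(x_1,…,x_n;β). -/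

import Mathlib

open scoped Classical

noncomputable section

namespace SVTCrystal

/-- A filling assigns to each (row, column) position (0-indexed) a finite set of entries. -/
abbrev Filling : Type := ℕ → ℕ → Finset ℕ

/-- `lam` is a partition shape with at most `n` rows. -/
def IsPartitionShape (n : ℕ) (lam : ℕ → ℕ) : Prop :=
  (∀ r, lam (r + 1) ≤ lam r) ∧ (∀ r, n ≤ r → lam r = 0)

/-- Semistandard set-valued tableau of shape `lam` with entries in `{1,…,n}`. -/
structure IsSVT (n : ℕ) (lam : ℕ → ℕ) (t : Filling) : Prop where
  boxNonempty : ∀ r c, c < lam r → (t r c).Nonempty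
  emptyOutside : ∀ r c, ¬ c < lam r → t r c = ∅
  entryBounds : ∀ r c a, a ∈ t r c → 1 ≤ a ∧ a ≤ n
  rowWeak : ∀ r c a b, a ∈ t r c → b ∈ t r (c + 1) → a ≤ b
  colStrict : ∀ r c a b, a ∈ t r c → b ∈ t (r + 1) c → a < b

/-- Semistandard Young tableau: a set-valued tableau all of whose boxes are singletons. -/
def IsSSYT (n : ℕ) (lam : ℕ → ℕ) (t : Filling) : Prop :=
  IsSVT n lam t ∧ ∀ r c, c < lam r → (t r c).card = 1

/-- The weight: `wt n lam t j` is the number of boxes of `t` containing the entry `j`. -/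
def wt (n : ℕ) (lam : ℕ → ℕ) (t : Filling) (j : ℕ) : ℕ :=
  ((Finset.range n ×ˢ Finset.range (lam 0)).filter (fun p => j ∈ t p.1 p.2)).card

/-- The excess: total number of extra entries. -/
def excess (n : ℕ) (lam : ℕ → ℕ) (t : Filling) : ℕ :=
  ∑ p ∈ Finset.range n ×ˢ Finset.range (lam 0), ((t p.1 p.2).card - 1)

/-- Column `c` contains the entry `a`. -/
def colHas (n : ℕ) (t : Filling) (a c : ℕ) : Prop := ∃ r, r < n ∧ a ∈ t r c

/-- The sign of column `c` for the `i`-signature rule: `+` (true) if the column contains `i`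
but not `i+1`, `-` (false) if it contains `i+1` but not `i`. -/
def colSign (n : ℕ) (t : Filling) (i c : ℕ) : Option Bool :=
  if colHas n t i c ∧ ¬ colHas n t (i + 1) c then some true
  else if colHas n t (i + 1) c ∧ ¬ colHas n t i c then some false
  else none

/-- The number of `-` (false) signs left uncanceled after scanning the word left-to-right,
iteratively canceling `-+` pairs. -/
def mctr (w : List Bool) : ℕ := w.foldl (fun cnt b => if b then cnt - 1 else cnt + 1) 0

/-- The number of `+` (true) signs left uncanceled, scanning right-to-left. -/
def pctr (w : List Bool) : ℕ := w.foldr (fun b cnt => if b then cnt + 1 else cnt - 1) 0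

/-- The word of column signs of the columns before column `c`. -/
def colWordBefore (n : ℕ) (t : Filling) (i c : ℕ) : List Bool :=
  (List.range c).filterMap (colSign n t i)

/-- The word of column signs of the columns after column `c` (among columns `< ncols`). -/
def colWordAfter (n ncols : ℕ) (t : Filling) (i c : ℕ) : List Bool :=
  ((List.range ncols).drop (c + 1)).filterMap (colSign n t i)

/-- Column `c` carries an uncanceled `+` for the `i`-signature rule. -/
def PlusCol (n ncols : ℕ) (t : Filling) (i c : ℕ) : Prop :=
  c < ncols ∧ colSign n t i c = some true ∧ mctr (colWordBefore n t i c) = 0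

/-- Column `c` carries an uncanceled `-` for the `i`-signature rule. -/
def MinusCol (n ncols : ℕ) (t : Filling) (i c : ℕ) : Prop :=
  c < ncols ∧ colSign n t i c = some false ∧ pctr (colWordAfter n ncols t i c) = 0

/-- Column `c` is the rightmost uncanceled `+`. -/
def fBoxCol (n ncols : ℕ) (t : Filling) (i c : ℕ) : Prop :=
  PlusCol n ncols t i c ∧ ∀ c', PlusCol n ncols t i c' → c' ≤ c

/-- Column `c` is the leftmost uncanceled `-`. -/
def eBoxCol (n ncols : ℕ) (t : Filling) (i c : ℕ) : Prop :=
  MinusCol n ncols t i c ∧ ∀ c', MinusCol n ncols t i c' → c ≤ c'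

/-- Replace the content of the box in row `r`, column `c` by `A`. -/
def updateBox (t : Filling) (r c : ℕ) (A : Finset ℕ) : Filling :=
  fun r' c' => if r' = r ∧ c' = c then A else t r' c'

/-- The set-valued crystal operator `f_i` (signature rule). -/
def fRaw (n : ℕ) (lam : ℕ → ℕ) (i : ℕ) (t : Filling) : Option Filling :=
  if h : ∃ c, fBoxCol n (lam 0) t i c then
    let c := Classical.choose h
    if hr : ∃ r, r < n ∧ i ∈ t r c then
      let r := Classical.choose hr
      if i ∈ t r (c + 1) then
        some (updateBox (updateBox t r (c + 1) ((t r (c + 1)).erase i)) r c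
          (insert (i + 1) (t r c)))
      else some (updateBox t r c (insert (i + 1) ((t r c).erase i)))
    else none
  else none

/-- The set-valued crystal operator `e_i` (signature rule). -/
def eRaw (n : ℕ) (lam : ℕ → ℕ) (i : ℕ) (t : Filling) : Option Filling :=
  if h : ∃ c, eBoxCol n (lam 0) t i c then
    let c := Classical.choose h
    if hr : ∃ r, r < n ∧ (i + 1) ∈ t r c then
      let r := Classical.choose hr
      if 0 < c ∧ (i + 1) ∈ t r (c - 1) then
        some (updateBox (updateBox t r (c - 1) ((t r (c - 1)).erase (i + 1))) r c
          (insert i (t r c)))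
      else some (updateBox t r c (insert i ((t r c).erase (i + 1))))
    else none
  else none

/-- Iterate a partially-defined operator. -/
def iterOpt (g : Filling → Option Filling) : ℕ → Filling → Option Filling
  | 0, t => some t
  | m + 1, t => (iterOpt g m t).bind g

/-- Highest weight (Yamanouchi) elements. -/
def IsYamanouchi (n : ℕ) (lam : ℕ → ℕ) (t : Filling) : Prop :=
  ∀ i, 1 ≤ i → i < n → eRaw n lam i t = none

/-- Closure of `t0` under the crystal operators `e_i`, `f_i` for `1 ≤ i < n`. -/
inductive Reach (n : ℕ) (lam : ℕ → ℕ) (t0 : Filling) : Filling → Prop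
  | base : Reach n lam t0 t0
  | stepF : ∀ {t t' : Filling} (i : ℕ), 1 ≤ i → i < n → Reach n lam t0 t →
      fRaw n lam i t = some t' → Reach n lam t0 t'
  | stepE : ∀ {t t' : Filling} (i : ℕ), 1 ≤ i → i < n → Reach n lam t0 t →
      eRaw n lam i t = some t' → Reach n lam t0 t'

/-- The one-row partition `(s)`. -/
def rowShape (s : ℕ) : ℕ → ℕ := fun r => if r = 0 then s else 0

/-- The one-column partition `(1^k)`. -/
def colShape (k : ℕ) : ℕ → ℕ := fun r => if r < k then 1 else 0

/-- The hook partition `(s, 1^e)`. -/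
def hookShape (s e : ℕ) : ℕ → ℕ := fun r => if r = 0 then s else if r ≤ e then 1 else 0

/-! ### K-theory crystal operators (for single rows and single columns) -/

/-- Some box of the tableau contains the entry `a`. -/
def containsEntry (n : ℕ) (lam : ℕ → ℕ) (t : Filling) (a : ℕ) : Prop :=
  ∃ r c, r < n ∧ c < lam r ∧ a ∈ t r c

/-- `p` is the rightmost box of `t` containing `i`. -/
def KBoxF (n : ℕ) (lam : ℕ → ℕ) (t : Filling) (i : ℕ) (p : ℕ × ℕ) : Prop :=
  p.1 < n ∧ p.2 < lam p.1 ∧ i ∈ t p.1 p.2 ∧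
    ∀ q : ℕ × ℕ, q.1 < n → q.2 < lam q.1 → i ∈ t q.1 q.2 → q.2 ≤ p.2

/-- The K-crystal operator `f_i^K`: if `i` occurs in `t` and `i+1` does not, add `i+1` to
the rightmost box containing `i`; otherwise `0`. -/
def fK (n : ℕ) (lam : ℕ → ℕ) (i : ℕ) (t : Filling) : Option Filling :=
  if h : (∃ p : ℕ × ℕ, KBoxF n lam t i p) ∧ ¬ containsEntry n lam t (i + 1) then
    let p := Classical.choose h.1
    some (updateBox t p.1 p.2 (insert (i + 1) (t p.1 p.2)))
  else none

/-- The K-crystal operator `e_i^K`: delete `i+1` from the box containing both `i` and `i+1`,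
if such a box exists; otherwise `0`. -/
def eK (n : ℕ) (lam : ℕ → ℕ) (i : ℕ) (t : Filling) : Option Filling :=
  if h : ∃ p : ℕ × ℕ, p.1 < n ∧ p.2 < lam p.1 ∧ i ∈ t p.1 p.2 ∧ (i + 1) ∈ t p.1 p.2 then
    let p := Classical.choose h
    some (updateBox t p.1 p.2 ((t p.1 p.2).erase (i + 1)))
  else none

/-- `t'` is the result of applying `g` to `t` as many times as possible. -/
def MaxApply (g : Filling → Option Filling) (t t' : Filling) : Prop :=
  (∃ m, iterOpt g m t = some t') ∧ g t' = none

/-- One Demazure step: apply `e_i` as many times as possible, then `e_i^K` as many times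
as possible (here `eKop i` is the `i`-th K-operator). -/
def DemStep (n : ℕ) (lam : ℕ → ℕ) (eKop : ℕ → Filling → Option Filling) (i : ℕ)
    (t t' : Filling) : Prop :=
  ∃ t1, MaxApply (eRaw n lam i) t t1 ∧ MaxApply (eKop i) t1 t'

/-- `DemReach n lam eKop [i₁,…,iℓ] t u` holds when
`u = (e_{iℓ}^K)^max e_{iℓ}^max ⋯ (e_{i₁}^K)^max e_{i₁}^max t`. -/
def DemReach (n : ℕ) (lam : ℕ → ℕ) (eKop : ℕ → Filling → Option Filling) :
    List ℕ → Filling → Filling → Prop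
  | [], t, u => t = u
  | i :: rest, t, u => ∃ t2, DemStep n lam eKop i t t2 ∧ DemReach n lam eKop rest t2 u

/-- The minimal highest weight tableau `u_λ`, whose row `r` boxes are all `{r+1}`. -/
def uTab (lam : ℕ → ℕ) : Filling := fun r c => if c < lam r then {r + 1} else ∅

/-- The K-Demazure crystal associated with a word `[i₁,…,iℓ]`. -/
def KDem (n : ℕ) (lam : ℕ → ℕ) (eKop : ℕ → Filling → Option Filling) (word : List ℕ) :
    Set Filling :=
  {t | IsSVT n lam t ∧ DemReach n lam eKop word t (uTab lam)}

/-! ### Permutations and reduced words -/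

/-- The permutation `s_{i₁} ⋯ s_{iℓ}` of a word `[i₁,…,iℓ]`, where `s_i` swaps `i`, `i+1`. -/
def wordPerm (word : List ℕ) : Equiv.Perm ℕ :=
  (word.map fun i => Equiv.swap i (i + 1)).prod

/-- `word` is a reduced word for `w` in the Coxeter generators `s_1, …, s_{n-1}`. -/
def IsReducedWord (n : ℕ) (w : Equiv.Perm ℕ) (word : List ℕ) : Prop :=
  (∀ i ∈ word, 1 ≤ i ∧ i < n) ∧ wordPerm word = w ∧
    ∀ word' : List ℕ, (∀ i ∈ word', 1 ≤ i ∧ i < n) → wordPerm word' = w →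
      word.length ≤ word'.length

/-- The Coxeter length of a permutation of `{1,…,n}`. -/
def permLength (n : ℕ) (σ : Equiv.Perm ℕ) : ℕ :=
  sInf {l | ∃ word : List ℕ, (∀ i ∈ word, 1 ≤ i ∧ i < n) ∧ wordPerm word = σ ∧
    word.length = l}

/-- The parabolic subgroup generated by `s_2, …, s_{n-1}`. -/
def parabolic (n : ℕ) : Subgroup (Equiv.Perm ℕ) :=
  Subgroup.closure {σ | ∃ i, 2 ≤ i ∧ i < n ∧ σ = Equiv.swap i (i + 1)}

/-! ### Polynomials -/

/-- Polynomials in `x₁, x₂, …` over `ℤ[β]`; the variable `β` is `Polynomial.X`. -/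
abbrev KPoly : Type := MvPolynomial ℕ (Polynomial ℤ)

/-- The scalar `β`. -/
def betaP : KPoly := MvPolynomial.C Polynomial.X

/-- The monomial `x^{wt(T)} = x₁^{wt₁} ⋯ xₙ^{wtₙ}`. -/
def xwt (n : ℕ) (lam : ℕ → ℕ) (t : Filling) : KPoly :=
  ∏ j ∈ Finset.Icc 1 n, (MvPolynomial.X j : KPoly) ^ wt n lam t j

/-- The β-character `∑_{T ∈ S} β^{excess T} x^{wt T}` of a set of tableaux. -/
def charSet (n : ℕ) (lam : ℕ → ℕ) (S : Set Filling) : KPoly :=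
  ∑ᶠ t ∈ S, betaP ^ excess n lam t * xwt n lam t

/-- The symmetric Grothendieck polynomial `𝔊_λ(x₁,…,xₙ; β)`. -/
def Groth (n : ℕ) (lam : ℕ → ℕ) : KPoly :=
  charSet n lam {t | IsSVT n lam t}

/-- The Schur polynomial `s_μ(x₁,…,xₙ)`. -/
def SchurP (n : ℕ) (mu : ℕ → ℕ) : KPoly :=
  ∑ᶠ t ∈ {t : Filling | IsSSYT n mu t}, xwt n mu t

/-- The numerator defining the Demazure–Lascoux operator `ϖ_i`. -/
def DLnum (i : ℕ) (f : KPoly) : KPoly :=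
  (MvPolynomial.X i + betaP * MvPolynomial.X i * MvPolynomial.X (i + 1)) * f -
    (MvPolynomial.X (i + 1) + betaP * MvPolynomial.X i * MvPolynomial.X (i + 1)) *
      (MvPolynomial.rename (Equiv.swap i (i + 1)) f)

/-- `DL` implements the Demazure–Lascoux operators `ϖ_i` for `1 ≤ i < n`:
`(x_i - x_{i+1}) · ϖ_i f` equals the defining numerator. -/
def IsDLOp (n : ℕ) (DL : ℕ → KPoly → KPoly) : Prop :=
  ∀ i, 1 ≤ i → i < n → ∀ f : KPoly,
    (MvPolynomial.X i - MvPolynomial.X (i + 1)) * DL i f = DLnum i f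

/-- `applyDL DL [i₁,…,iℓ] f = ϖ_{i₁} ϖ_{i₂} ⋯ ϖ_{iℓ} f`. -/
def applyDL (DL : ℕ → KPoly → KPoly) : List ℕ → KPoly → KPoly
  | [], f => f
  | i :: rest, f => DL i (applyDL DL rest f)

/-! ### Auxiliary development for the main theorem -/

section RowBasics

variable {n k : ℕ} {t : Filling}

lemma rowShape_zero (k : ℕ) : rowShape k 0 = k := rfl

lemma IsSVT.rowEmpty (ht : IsSVT n (rowShape k) t) {r : ℕ} (c : ℕ) (hr : r ≠ 0) : t r c = ∅ :=
  ht.emptyOutside r c (by simp [rowShape, hr])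

lemma IsSVT.colEmpty (ht : IsSVT n (rowShape k) t) {c : ℕ} (hc : k ≤ c) : t 0 c = ∅ :=
  ht.emptyOutside 0 c (by simp [rowShape]; omega)

lemma IsSVT.lt_of_mem (ht : IsSVT n (rowShape k) t) {c a : ℕ} (h : a ∈ t 0 c) : c < k := by
  by_contra hc
  rw [ht.colEmpty (by omega)] at h
  exact absurd h (Finset.notMem_empty a)

lemma IsSVT.row_mono (ht : IsSVT n (rowShape k) t) {c c' a b : ℕ} (hcc : c < c')
    (ha : a ∈ t 0 c) (hb : b ∈ t 0 c') : a ≤ b := by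
  induction c' generalizing b with
  | zero => omega
  | succ d ih =>
    rcases Nat.lt_or_ge c d with h' | h'
    · have hd : d < k := by have := ht.lt_of_mem hb; omega
      obtain ⟨x, hx⟩ := ht.boxNonempty 0 d (by simpa [rowShape] using hd)
      exact le_trans (ih h' hx) (ht.rowWeak 0 d x b hx hb)
    · have : c = d := by omega
      subst this
      exact ht.rowWeak 0 c a b ha hb

lemma colHas_iff (hn : 0 < n) (hrow : ∀ r c, r ≠ 0 → t r c = ∅) {a c : ℕ} :
    colHas n t a c ↔ a ∈ t 0 c := by
  constructor
  · rintro ⟨r, hr, h⟩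
    rcases Nat.eq_zero_or_pos r with rfl | hr0
    · exact h
    · rw [hrow r c (by omega)] at h; exact absurd h (Finset.notMem_empty a)
  · intro h; exact ⟨0, hn, h⟩

lemma wt_eq (hn : 0 < n) (hrow : ∀ r c, r ≠ 0 → t r c = ∅) (j : ℕ) :
    wt n (rowShape k) t j = ((Finset.range k).filter (fun c => j ∈ t 0 c)).card := by
  rw [wt]
  have hset : (Finset.range n ×ˢ Finset.range (rowShape k 0)).filter (fun p => j ∈ t p.1 p.2)
      = {0} ×ˢ ((Finset.range k).filter (fun c => j ∈ t 0 c)) := by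
    ext ⟨r, c⟩
    simp only [Finset.mem_filter, Finset.mem_product, Finset.mem_range, Finset.mem_singleton,
      rowShape_zero]
    constructor
    · rintro ⟨⟨hr, hc⟩, hj⟩
      have hr0 : r = 0 := by
        by_contra h'
        rw [hrow r c h'] at hj
        exact absurd hj (Finset.notMem_empty j)
      subst hr0
      exact ⟨rfl, hc, hj⟩
    · rintro ⟨rfl, hc, hj⟩
      exact ⟨⟨hn, hc⟩, hj⟩
  rw [hset, Finset.card_product, Finset.card_singleton, one_mul]

lemma excess_eq (hn : 0 < n) (hrow : ∀ r c, r ≠ 0 → t r c = ∅) :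
    excess n (rowShape k) t = ∑ c ∈ Finset.range k, ((t 0 c).card - 1) := by
  rw [excess, Finset.sum_product]
  rw [Finset.sum_eq_single_of_mem 0 (by simp; omega)]
  · rfl
  · intro r _ hr
    apply Finset.sum_eq_zero
    intro c _
    rw [hrow r c hr]
    simp

end RowBasics

section IterOpt

lemma iterOpt_cons (g : Filling → Option Filling) {t t' : Filling} (h : g t = some t') :
    ∀ m, iterOpt g (m + 1) t = iterOpt g m t' := by
  intro m
  induction m with
  | zero => simp [iterOpt, h]
  | succ m ih =>
    show (iterOpt g (m + 1) t).bind g = (iterOpt g m t').bind g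
    rw [ih]

lemma iterOpt_stall {g : Filling → Option Filling} {t a : Filling} {m : ℕ}
    (h1 : iterOpt g m t = some a) (h2 : g a = none) :
    ∀ j, 0 < j → iterOpt g (m + j) t = none := by
  intro j hj
  induction j with
  | zero => omega
  | succ j ih =>
    rcases Nat.eq_zero_or_pos j with rfl | hj0
    · show (iterOpt g (m + 0) t).bind g = none
      rw [Nat.add_zero, h1]; exact h2
    · show (iterOpt g (m + j) t).bind g = none
      rw [ih hj0]; rfl

lemma maxApply_unique {g : Filling → Option Filling} {t a b : Filling}
    (ha : MaxApply g t a) (hb : MaxApply g t b) : a = b := by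
  obtain ⟨⟨m, hm⟩, hga⟩ := ha
  obtain ⟨⟨m', hm'⟩, hgb⟩ := hb
  have key : ∀ {m m' : ℕ} {a b : Filling}, m ≤ m' → iterOpt g m t = some a → g a = none →
      iterOpt g m' t = some b → a = b := by
    intro m m' a b hle h1 h2 h3
    rcases Nat.eq_or_lt_of_le hle with rfl | hlt
    · rw [h1] at h3; exact Option.some_injective _ h3
    · obtain ⟨j, rfl⟩ := Nat.exists_eq_add_of_lt hlt
      have := iterOpt_stall h1 h2 (j + 1) (by omega)
      rw [show m + (j + 1) = m + j + 1 by omega] at this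
      rw [this] at h3
      exact absurd h3 (by simp)
  rcases le_total m m' with h | h
  · exact key h hm hga hm'
  · exact (key h hm' hgb hm).symm

end IterOpt

section Flat

/-- Replace every `i+1` by `i` in each box. -/
def flat (i : ℕ) (t : Filling) : Filling :=
  fun r c => if (i + 1) ∈ t r c then insert i ((t r c).erase (i + 1)) else t r c

variable {n k i : ℕ} {t : Filling}

lemma mem_flat {a r c : ℕ} :
    a ∈ flat i t r c ↔ (a ∈ t r c ∧ a ≠ i + 1) ∨ (a = i ∧ (i + 1) ∈ t r c) := by
  unfold flat
  by_cases h : (i + 1) ∈ t r c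
  · rw [if_pos h]
    simp only [Finset.mem_insert, Finset.mem_erase]
    constructor
    · rintro (rfl | ⟨hne, hm⟩)
      · exact Or.inr ⟨rfl, h⟩
      · exact Or.inl ⟨hm, hne⟩
    · rintro (⟨hm, hne⟩ | ⟨rfl, _⟩)
      · exact Or.inr ⟨hne, hm⟩
      · exact Or.inl rfl
  · rw [if_neg h]
    constructor
    · intro hm
      exact Or.inl ⟨hm, fun hh => h (hh ▸ hm)⟩
    · rintro (⟨hm, _⟩ | ⟨rfl, hm⟩)
      · exact hm
      · exact absurd hm h

lemma succ_not_mem_flat {r c : ℕ} : (i + 1) ∉ flat i t r c := by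
  rw [mem_flat]
  rintro (⟨_, hne⟩ | ⟨heq, _⟩)
  · exact hne rfl
  · omega

lemma flat_empty {r c : ℕ} (h : t r c = ∅) : flat i t r c = ∅ := by
  unfold flat; rw [h]; simp

lemma flat_eq_self (h : ∀ r c, (i + 1) ∉ t r c) : flat i t = t := by
  funext r c
  unfold flat
  rw [if_neg (h r c)]

lemma flat_isSVT (ht : IsSVT n (rowShape k) t) (hi1 : 1 ≤ i) (hin : i < n) :
    IsSVT n (rowShape k) (flat i t) := by
  constructor
  · intro r c hc
    obtain ⟨x, hx⟩ := ht.boxNonempty r c hc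
    by_cases hm : (i+1) ∈ t r c
    · exact ⟨i, by unfold SVTCrystal.flat; rw [if_pos hm]; simp⟩
    · exact ⟨x, by unfold SVTCrystal.flat; rw [if_neg hm]; exact hx⟩
  · intro r c hc
    exact flat_empty (ht.emptyOutside r c hc)
  · intro r c a ha
    rw [mem_flat] at ha
    rcases ha with ⟨hm, _⟩ | ⟨heq, _⟩
    · exact ht.entryBounds r c a hm
    · omega
  · intro r c a b ha hb
    rw [mem_flat] at ha hb
    rcases ha with ⟨ham, hane⟩ | ⟨haeq, ham⟩
    · rcases hb with ⟨hbm, _⟩ | ⟨hbeq, hbm⟩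
      · exact ht.rowWeak r c a b ham hbm
      · have := ht.rowWeak r c a (i+1) ham hbm
        omega
    · rcases hb with ⟨hbm, _⟩ | ⟨hbeq, _⟩
      · have := ht.rowWeak r c (i+1) b ham hbm
        omega
      · omega
  · intro r c a b _ hb
    rw [mem_flat] at hb
    rcases hb with ⟨hbm, _⟩ | ⟨_, hbm⟩ <;>
    · rw [ht.rowEmpty c (Nat.succ_ne_zero r)] at hbm
      exact absurd hbm (Finset.notMem_empty _)

end Flat

section SMdef

/-- The set of one-row SVTs with all entries at most `m`. -/
def SM (n k m : ℕ) : Set Filling :=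
  {t | IsSVT n (rowShape k) t ∧ ∀ c a, a ∈ t 0 c → a ≤ m}

lemma finite_svt (n k : ℕ) : {t : Filling | IsSVT n (rowShape k) t}.Finite := by
  classical
  have hsub : {t : Filling | IsSVT n (rowShape k) t} ⊆
      Set.range (fun F : Fin k → Finset (Fin (n + 1)) =>
        (fun r c => if h : r = 0 ∧ c < k then Finset.image Fin.val (F ⟨c, h.2⟩) else ∅ : Filling)) := by
    intro t ht
    refine ⟨fun c => Finset.attachFin (t 0 c.1) (fun m hm => ?_), ?_⟩
    · exact Nat.lt_succ_of_le ((ht.entryBounds 0 c.1 m hm).2)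
    · funext r c
      beta_reduce
      by_cases h : r = 0 ∧ c < k
      · obtain ⟨rfl, hc⟩ := h
        rw [dif_pos ⟨rfl, hc⟩]
        ext a
        simp only [Finset.mem_image, Finset.mem_attachFin]
        constructor
        · rintro ⟨b, hb, rfl⟩; exact hb
        · intro ha
          exact ⟨⟨a, Nat.lt_succ_of_le ((ht.entryBounds 0 c a ha).2)⟩, ha, rfl⟩
      · rw [dif_neg h]
        symm
        rcases Nat.eq_zero_or_pos r with rfl | hr
        · exact ht.colEmpty (by omega)
        · exact ht.rowEmpty c (by omega)
  exact (Set.finite_range _).subset hsub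

lemma finite_SM (n k m : ℕ) : (SM n k m).Finite :=
  (finite_svt n k).subset (fun _ ht => ht.1)

lemma SM_mono {n k m m' : ℕ} (h : m ≤ m') : SM n k m ⊆ SM n k m' :=
  fun _ ht => ⟨ht.1, fun c a ha => le_trans (ht.2 c a ha) h⟩

lemma SM_top (n k : ℕ) : SM n k n = {t | IsSVT n (rowShape k) t} := by
  ext t
  constructor
  · exact fun ht => ht.1
  · exact fun ht => ⟨ht, fun c a ha => (ht.entryBounds 0 c a ha).2⟩

end SMdef

section Signs

variable {n k i : ℕ} {t : Filling}

/-- Column `c` contains `i+1` but not `i` (a `-` column in a one-row tableau). -/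
def isMinus (t : Filling) (i c : ℕ) : Prop := (i + 1) ∈ t 0 c ∧ i ∉ t 0 c

/-- Box `c` contains both `i` and `i+1`. -/
def isMixed (t : Filling) (i c : ℕ) : Prop := i ∈ t 0 c ∧ (i + 1) ∈ t 0 c

lemma colSign_of_minus (hn : 0 < n) (hrow : ∀ r c, r ≠ 0 → t r c = ∅) {c : ℕ}
    (h : isMinus t i c) : colSign n t i c = some false := by
  unfold colSign
  rw [if_neg, if_pos]
  · exact ⟨(colHas_iff hn hrow).mpr h.1, fun hc => h.2 ((colHas_iff hn hrow).mp hc)⟩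
  · rintro ⟨hc, -⟩
    exact h.2 ((colHas_iff hn hrow).mp hc)

lemma colSign_false_elim (hn : 0 < n) (hrow : ∀ r c, r ≠ 0 → t r c = ∅) {c : ℕ}
    (h : colSign n t i c = some false) : isMinus t i c := by
  unfold colSign at h
  by_cases h1 : colHas n t i c ∧ ¬ colHas n t (i + 1) c
  · rw [if_pos h1] at h; exact absurd h (by simp)
  · rw [if_neg h1] at h
    by_cases h2 : colHas n t (i + 1) c ∧ ¬ colHas n t i c
    · exact ⟨(colHas_iff hn hrow).mp h2.1, fun hm => h2.2 ((colHas_iff hn hrow).mpr hm)⟩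
    · rw [if_neg h2] at h; exact absurd h (by simp)

lemma colSign_true_elim (hn : 0 < n) (hrow : ∀ r c, r ≠ 0 → t r c = ∅) {c : ℕ}
    (h : colSign n t i c = some true) : i ∈ t 0 c ∧ (i + 1) ∉ t 0 c := by
  unfold colSign at h
  by_cases h1 : colHas n t i c ∧ ¬ colHas n t (i + 1) c
  · exact ⟨(colHas_iff hn hrow).mp h1.1, fun hm => h1.2 ((colHas_iff hn hrow).mpr hm)⟩
  · rw [if_neg h1] at h
    by_cases h2 : colHas n t (i + 1) c ∧ ¬ colHas n t i c
    · rw [if_pos h2] at h; exact absurd h (by simp)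
    · rw [if_neg h2] at h; exact absurd h (by simp)

lemma pctr_eq_zero {l : List Bool} (h : ∀ b ∈ l, b = false) : pctr l = 0 := by
  induction l with
  | nil => rfl
  | cons b l ih =>
    have hb := h b (List.mem_cons_self)
    subst hb
    have h1 : pctr (false :: l) = pctr l - 1 := by simp [pctr]
    rw [h1, ih (fun b hb => h b (List.mem_cons_of_mem _ hb))]

lemma colWordAfter_false (ht : IsSVT n (rowShape k) t) (hn : 0 < n) {c0 : ℕ}
    (hmem : (i + 1) ∈ t 0 c0) : ∀ b ∈ colWordAfter n k t i c0, b = false := by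
  intro b hb
  unfold colWordAfter at hb
  rw [List.mem_filterMap] at hb
  obtain ⟨c', hc', hsig⟩ := hb
  have hgt : c0 < c' := by
    obtain ⟨j, hj, hEq⟩ := List.getElem_of_mem hc'
    rw [List.getElem_drop, List.getElem_range] at hEq
    omega
  cases b with
  | false => rfl
  | true =>
    have h2 := colSign_true_elim hn (fun r c hr => ht.rowEmpty c hr) hsig
    have := ht.row_mono hgt hmem h2.1
    omega

lemma minusCol_iff (ht : IsSVT n (rowShape k) t) (hn : 0 < n) {c : ℕ} :
    MinusCol n k t i c ↔ isMinus t i c := by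
  constructor
  · intro h
    exact colSign_false_elim hn (fun r c hr => ht.rowEmpty c hr) h.2.1
  · intro h
    refine ⟨ht.lt_of_mem h.1, colSign_of_minus hn (fun r c hr => ht.rowEmpty c hr) h,
      pctr_eq_zero (colWordAfter_false ht hn h.1)⟩

lemma mixed_unique (ht : IsSVT n (rowShape k) t) {c c' : ℕ}
    (h : isMixed t i c) (h' : isMixed t i c') : c = c' := by
  by_contra hne
  rcases Nat.lt_or_ge c c' with hlt | hge
  · have := ht.row_mono hlt h.2 h'.1
    omega
  · have hlt : c' < c := by omega
    have := ht.row_mono hlt h'.2 h.1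
    omega

end Signs

section Update

lemma updateBox_same (t : Filling) (r c : ℕ) (A : Finset ℕ) : updateBox t r c A r c = A := by
  simp [updateBox]

lemma updateBox_ne (t : Filling) (r c : ℕ) (A : Finset ℕ) {r' c' : ℕ}
    (h : ¬(r' = r ∧ c' = c)) : updateBox t r c A r' c' = t r' c' := by
  simp only [updateBox, if_neg h]

end Update

section ERawEval

variable {n k i : ℕ} {t : Filling}

lemma eRaw_none (ht : IsSVT n (rowShape k) t) (hn : 0 < n)
    (h : ∀ c, ¬ isMinus t i c) : eRaw n (rowShape k) i t = none := by
  unfold eRaw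
  rw [dif_neg]
  rintro ⟨c, hc, -⟩
  exact h c ((minusCol_iff ht hn).mp hc)

lemma eRaw_some (ht : IsSVT n (rowShape k) t) (hn : 0 < n) {c0 : ℕ}
    (hm : isMinus t i c0) (hmin : ∀ c', isMinus t i c' → c0 ≤ c') :
    eRaw n (rowShape k) i t =
      some (if 0 < c0 ∧ (i + 1) ∈ t 0 (c0 - 1) then
        updateBox (updateBox t 0 (c0 - 1) ((t 0 (c0 - 1)).erase (i + 1))) 0 c0
          (insert i (t 0 c0))
      else updateBox t 0 c0 (insert i ((t 0 c0).erase (i + 1)))) := by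
  have hbox : eBoxCol n (rowShape k 0) t i c0 :=
    ⟨(minusCol_iff ht hn).mpr hm, fun c' hc' => hmin c' ((minusCol_iff ht hn).mp hc')⟩
  have hex : ∃ c, eBoxCol n (rowShape k 0) t i c := ⟨c0, hbox⟩
  unfold eRaw
  rw [dif_pos hex]
  have hcc : Classical.choose hex = c0 := by
    have hspec := Classical.choose_spec hex
    exact le_antisymm (hspec.2 c0 hbox.1) (hbox.2 _ hspec.1)
  simp only [hcc]
  have hr : ∃ r, r < n ∧ (i + 1) ∈ t r c0 := ⟨0, hn, hm.1⟩
  rw [dif_pos hr]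
  have hr0 : Classical.choose hr = 0 := by
    have hspec := Classical.choose_spec hr
    by_contra h0
    rw [ht.rowEmpty c0 h0] at hspec
    exact absurd hspec.2 (Finset.notMem_empty _)
  simp only [hr0]
  split_ifs <;> rfl

lemma eK_none (hrow : ∀ r c, r ≠ 0 → t r c = ∅) (h : ∀ c, ¬ isMixed t i c) :
    eK n (rowShape k) i t = none := by
  unfold eK
  rw [dif_neg]
  rintro ⟨⟨r, c⟩, hr, hc, hi, hi1⟩
  rcases Nat.eq_zero_or_pos r with rfl | hr0
  · exact h c ⟨hi, hi1⟩
  · rw [hrow r c (by omega)] at hi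
    exact absurd hi (Finset.notMem_empty _)

lemma eK_some (ht : IsSVT n (rowShape k) t) (hn : 0 < n) {cm : ℕ} (hmix : isMixed t i cm) :
    eK n (rowShape k) i t = some (updateBox t 0 cm ((t 0 cm).erase (i + 1))) := by
  have hex : ∃ p : ℕ × ℕ, p.1 < n ∧ p.2 < rowShape k p.1 ∧ i ∈ t p.1 p.2 ∧ (i + 1) ∈ t p.1 p.2 :=
    ⟨(0, cm), hn, by simpa [rowShape] using ht.lt_of_mem hmix.1, hmix.1, hmix.2⟩
  unfold eK
  rw [dif_pos hex]
  have hcc : Classical.choose hex = (0, cm) := by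
    obtain ⟨h1, h2, h3, h4⟩ := Classical.choose_spec hex
    have hr0 : (Classical.choose hex).1 = 0 := by
      by_contra h0
      rw [ht.rowEmpty _ h0] at h3
      exact absurd h3 (Finset.notMem_empty _)
    rw [hr0] at h3 h4
    exact Prod.ext hr0 (mixed_unique ht ⟨h3, h4⟩ hmix)
  simp only [hcc]

end ERawEval

section EStep

variable {n k i : ℕ} {t : Filling}

/-- Number of `-` columns. -/
def mcount (k : ℕ) (t : Filling) (i : ℕ) : ℕ :=
  ((Finset.range k).filter (fun c => isMinus t i c)).card

lemma estep_props (ht : IsSVT n (rowShape k) t) (hn : 0 < n) (hi1 : 1 ≤ i) (hin : i < n)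
    {c0 : ℕ} (hm : isMinus t i c0) (hmin : ∀ c', isMinus t i c' → c0 ≤ c') :
    ∃ t', eRaw n (rowShape k) i t = some t' ∧ IsSVT n (rowShape k) t' ∧
      flat i t' = flat i t ∧ mcount k t' i + 1 = mcount k t i := by
  have hc0k : c0 < k := ht.lt_of_mem hm.1
  have hmimem : (i + 1) ∈ t 0 c0 := hm.1
  have himem : i ∉ t 0 c0 := hm.2
  by_cases hY : 0 < c0 ∧ (i + 1) ∈ t 0 (c0 - 1)
  · -- case: the box to the left also contains i+1 (so it is a mixed box)
    set t' := updateBox (updateBox t 0 (c0 - 1) ((t 0 (c0 - 1)).erase (i + 1))) 0 c0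
      (insert i (t 0 c0)) with ht'def
    have hmixprev : i ∈ t 0 (c0 - 1) := by
      by_contra h
      have := hmin (c0 - 1) ⟨hY.2, h⟩
      omega
    have tb1 : t' 0 (c0 - 1) = (t 0 (c0 - 1)).erase (i + 1) := by
      rw [ht'def, updateBox_ne _ _ _ _ (by omega), updateBox_same]
    have tb2 : t' 0 c0 = insert i (t 0 c0) := by
      rw [ht'def, updateBox_same]
    have tb3 : ∀ r c, ¬(r = 0 ∧ c = c0) → ¬(r = 0 ∧ c = c0 - 1) → t' r c = t r c := by
      intro r c h1 h2
      rw [ht'def, updateBox_ne _ _ _ _ h1, updateBox_ne _ _ _ _ h2]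
    have tb3' : ∀ r c, r ≠ 0 → t' r c = t r c := by
      intro r c hr
      exact tb3 r c (by tauto) (by tauto)
    have hmem' : ∀ c x, x ∈ t' 0 c →
        (c = c0 ∧ (x ∈ t 0 c0 ∨ x = i)) ∨
        (c = c0 - 1 ∧ x ∈ t 0 (c0 - 1) ∧ x ≠ i + 1) ∨
        (c ≠ c0 ∧ c ≠ c0 - 1 ∧ x ∈ t 0 c) := by
      intro c x hx
      by_cases h1 : c = c0
      · subst h1; rw [tb2] at hx
        rcases Finset.mem_insert.mp hx with heq | hx
        · exact Or.inl ⟨rfl, Or.inr heq⟩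
        · exact Or.inl ⟨rfl, Or.inl hx⟩
      · by_cases h2 : c = c0 - 1
        · subst h2; rw [tb1] at hx
          rcases Finset.mem_erase.mp hx with ⟨hne, hx⟩
          exact Or.inr (Or.inl ⟨rfl, hx, hne⟩)
        · rw [tb3 0 c (by tauto) (by tauto)] at hx
          exact Or.inr (Or.inr ⟨h1, h2, hx⟩)
    have ht' : IsSVT n (rowShape k) t' := by
      constructor
      · intro r c hc
        by_cases h1 : r = 0 ∧ c = c0
        · obtain ⟨rfl, rfl⟩ := h1; rw [tb2]; exact Finset.insert_nonempty _ _
        · by_cases h2 : r = 0 ∧ c = c0 - 1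
          · obtain ⟨rfl, rfl⟩ := h2; rw [tb1]
            exact ⟨i, Finset.mem_erase.mpr ⟨by omega, hmixprev⟩⟩
          · rw [tb3 r c h1 h2]; exact ht.boxNonempty r c hc
      · intro r c hc
        have h1 : ¬(r = 0 ∧ c = c0) := by
          rintro ⟨rfl, rfl⟩; rw [rowShape_zero] at hc; exact hc hc0k
        have h2 : ¬(r = 0 ∧ c = c0 - 1) := by
          rintro ⟨rfl, rfl⟩; rw [rowShape_zero] at hc; omega
        rw [tb3 r c h1 h2]; exact ht.emptyOutside r c hc
      · intro r c a ha
        rcases Nat.eq_zero_or_pos r with rfl | hr0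
        · rcases hmem' c a ha with ⟨_, (h | heq)⟩ | ⟨_, h, _⟩ | ⟨_, _, h⟩
          · exact ht.entryBounds 0 c0 a h
          · subst heq; omega
          · exact ht.entryBounds 0 (c0-1) a h
          · exact ht.entryBounds 0 c a h
        · rw [tb3' r c (by omega), ht.rowEmpty c (by omega)] at ha
          exact absurd ha (Finset.notMem_empty _)
      · intro r c a b ha hb
        rcases Nat.eq_zero_or_pos r with rfl | hr0
        · rcases hmem' c a ha with ⟨hc1, ha'⟩ | ⟨hc1, ham, hane⟩ | ⟨hc1, hc2, ham⟩
          · -- c = c0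
            subst hc1
            rcases hmem' (c + 1) b hb with ⟨hb1, _⟩ | ⟨hb1, _, _⟩ | ⟨_, _, hbm⟩
            · omega
            · omega
            · rcases ha' with ham | haeq
              · exact ht.rowWeak 0 c a b ham hbm
              · have := ht.rowWeak 0 c (i + 1) b hmimem hbm
                omega
          · -- c = c0 - 1
            subst hc1
            have hcc : c0 - 1 + 1 = c0 := by omega
            rw [hcc] at hb
            rcases hmem' c0 b hb with ⟨_, hb'⟩ | ⟨hb1, _, _⟩ | ⟨hb1, _, _⟩
            · rcases hb' with hbm | hbeq
              · exact ht.rowWeak 0 (c0 - 1) a b ham (by rw [hcc]; exact hbm)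
              · have := ht.rowWeak 0 (c0 - 1) a (i + 1) ham (by rw [hcc]; exact hmimem)
                omega
            · omega
            · omega
          · -- untouched column c
            rcases hmem' (c + 1) b hb with ⟨hb1, hb'⟩ | ⟨hb1, hbm, _⟩ | ⟨_, _, hbm⟩
            · rcases hb' with hbm | hbeq
              · exact ht.rowWeak 0 c a b ham (by rw [hb1]; exact hbm)
              · omega
            · exact ht.rowWeak 0 c a b ham (by rw [hb1]; exact hbm)
            · exact ht.rowWeak 0 c a b ham hbm
        · rw [tb3' r c (by omega)] at ha
          rw [tb3' r (c+1) (by omega)] at hb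
          exact ht.rowWeak r c a b ha hb
      · intro r c a b _ hb
        rw [tb3' (r+1) c (by omega), ht.rowEmpty c (by omega)] at hb
        exact absurd hb (Finset.notMem_empty _)
    refine ⟨t', by rw [eRaw_some ht hn hm hmin, if_pos hY], ht', ?_, ?_⟩
    · funext r c
      rcases Nat.eq_zero_or_pos r with rfl | hr0
      · by_cases h1 : c = c0
        · subst h1
          unfold flat
          rw [tb2, if_pos (Finset.mem_insert_of_mem hmimem), if_pos hmimem,
            Finset.erase_insert_of_ne (by omega : i ≠ i + 1), Finset.insert_idem]
        · by_cases h2 : c = c0 - 1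
          · subst h2
            unfold flat
            rw [tb1, if_neg (fun hh => (Finset.mem_erase.mp hh).1 rfl), if_pos hY.2]
            exact (Finset.insert_eq_self.mpr (Finset.mem_erase.mpr ⟨by omega, hmixprev⟩)).symm
          · unfold flat
            rw [tb3 0 c (by tauto) (by tauto)]
      · unfold flat
        rw [tb3' r c (by omega)]
    · unfold mcount
      have hset : (Finset.range k).filter (fun c => isMinus t' i c)
          = ((Finset.range k).filter (fun c => isMinus t i c)).erase c0 := by
        ext c
        simp only [Finset.mem_filter, Finset.mem_erase, Finset.mem_range]
        constructor
        · rintro ⟨hck, hmin'⟩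
          obtain ⟨hm1, hm2⟩ := hmin'
          have h1 : c ≠ c0 := by
            rintro rfl
            rw [tb2] at hm2
            exact hm2 (Finset.mem_insert_self i _)
          have h2 : c ≠ c0 - 1 := by
            rintro rfl
            rw [tb1] at hm1
            exact (Finset.mem_erase.mp hm1).1 rfl
          rw [tb3 0 c (by tauto) (by tauto)] at hm1 hm2
          exact ⟨h1, hck, hm1, hm2⟩
        · rintro ⟨h1, hck, hm1, hm2⟩
          have h2 : c ≠ c0 - 1 := by
            rintro rfl
            exact hm2 hmixprev
          refine ⟨hck, ?_, ?_⟩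
          · rw [tb3 0 c (by tauto) (by tauto)]; exact hm1
          · rw [tb3 0 c (by tauto) (by tauto)]; exact hm2
      have hc0in : c0 ∈ (Finset.range k).filter (fun c => isMinus t i c) := by
        simp only [Finset.mem_filter, Finset.mem_range]
        exact ⟨hc0k, hm⟩
      rw [hset, Finset.card_erase_of_mem hc0in]
      have hpos : 0 < ((Finset.range k).filter (fun c => isMinus t i c)).card :=
        Finset.card_pos.mpr ⟨c0, hc0in⟩
      omega
  · -- case: in-place modification at c0
    set t' := updateBox t 0 c0 (insert i ((t 0 c0).erase (i + 1))) with ht'def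
    have tb2 : t' 0 c0 = insert i ((t 0 c0).erase (i + 1)) := by
      rw [ht'def, updateBox_same]
    have tb3 : ∀ r c, ¬(r = 0 ∧ c = c0) → t' r c = t r c := by
      intro r c h1
      rw [ht'def, updateBox_ne _ _ _ _ h1]
    have hprev : 0 < c0 → (i + 1) ∉ t 0 (c0 - 1) := by
      intro h0 hmem
      exact hY ⟨h0, hmem⟩
    have hmem' : ∀ c x, x ∈ t' 0 c →
        (c = c0 ∧ ((x ∈ t 0 c0 ∧ x ≠ i + 1) ∨ x = i)) ∨ (c ≠ c0 ∧ x ∈ t 0 c) := by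
      intro c x hx
      by_cases h1 : c = c0
      · subst h1; rw [tb2] at hx
        rcases Finset.mem_insert.mp hx with heq | hx
        · exact Or.inl ⟨rfl, Or.inr heq⟩
        · rcases Finset.mem_erase.mp hx with ⟨hne, hx⟩
          exact Or.inl ⟨rfl, Or.inl ⟨hx, hne⟩⟩
      · rw [tb3 0 c (by tauto)] at hx
        exact Or.inr ⟨h1, hx⟩
    have ht' : IsSVT n (rowShape k) t' := by
      constructor
      · intro r c hc
        by_cases h1 : r = 0 ∧ c = c0
        · obtain ⟨rfl, rfl⟩ := h1; rw [tb2]; exact Finset.insert_nonempty _ _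
        · rw [tb3 r c h1]; exact ht.boxNonempty r c hc
      · intro r c hc
        have h1 : ¬(r = 0 ∧ c = c0) := by
          rintro ⟨rfl, rfl⟩; rw [rowShape_zero] at hc; exact hc hc0k
        rw [tb3 r c h1]; exact ht.emptyOutside r c hc
      · intro r c a ha
        rcases Nat.eq_zero_or_pos r with rfl | hr0
        · rcases hmem' c a ha with ⟨_, (⟨h, _⟩ | heq)⟩ | ⟨_, h⟩
          · exact ht.entryBounds 0 c0 a h
          · subst heq; omega
          · exact ht.entryBounds 0 c a h
        · rw [tb3 r c (by omega), ht.rowEmpty c (by omega)] at ha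
          exact absurd ha (Finset.notMem_empty _)
      · intro r c a b ha hb
        rcases Nat.eq_zero_or_pos r with rfl | hr0
        · rcases hmem' c a ha with ⟨hc1, (⟨ham, hane⟩ | haeq)⟩ | ⟨hc1, ham⟩
          · -- c = c0, a ∈ t 0 c0
            subst hc1
            rcases hmem' (c + 1) b hb with ⟨hb1, _⟩ | ⟨_, hbm⟩
            · omega
            · exact ht.rowWeak 0 c a b ham hbm
          · -- c = c0, a = i
            subst hc1
            rcases hmem' (c + 1) b hb with ⟨hb1, _⟩ | ⟨_, hbm⟩
            · omega
            · have := ht.rowWeak 0 c (i + 1) b hmimem hbm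
              omega
          · -- untouched column
            rcases hmem' (c + 1) b hb with ⟨hb1, hb'⟩ | ⟨_, hbm⟩
            · rcases hb' with ⟨hbm, _⟩ | hbeq
              · exact ht.rowWeak 0 c a b ham (by rw [hb1]; exact hbm)
              · -- b = i and c + 1 = c0, so c = c0 - 1 and i+1 ∉ t 0 c
                have h0 : 0 < c0 := by omega
                have := ht.rowWeak 0 c a (i + 1) ham (by rw [hb1]; exact hmimem)
                have hane : a ≠ i + 1 := by
                  rintro rfl
                  exact hprev h0 (by rw [show c0 - 1 = c by omega]; exact ham)
                omega
            · exact ht.rowWeak 0 c a b ham hbm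
        · rw [tb3 r c (by omega)] at ha
          rw [tb3 r (c+1) (by omega)] at hb
          exact ht.rowWeak r c a b ha hb
      · intro r c a b _ hb
        rw [tb3 (r+1) c (by omega), ht.rowEmpty c (by omega)] at hb
        exact absurd hb (Finset.notMem_empty _)
    refine ⟨t', by rw [eRaw_some ht hn hm hmin, if_neg hY], ht', ?_, ?_⟩
    · funext r c
      rcases Nat.eq_zero_or_pos r with rfl | hr0
      · by_cases h1 : c = c0
        · subst h1
          unfold flat
          rw [tb2, if_neg, if_pos hmimem]
          intro hh
          rcases Finset.mem_insert.mp hh with hh' | hh'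
          · omega
          · exact (Finset.mem_erase.mp hh').1 rfl
        · unfold flat
          rw [tb3 0 c (by tauto)]
      · unfold flat
        rw [tb3 r c (by omega)]
    · unfold mcount
      have hset : (Finset.range k).filter (fun c => isMinus t' i c)
          = ((Finset.range k).filter (fun c => isMinus t i c)).erase c0 := by
        ext c
        simp only [Finset.mem_filter, Finset.mem_erase, Finset.mem_range]
        constructor
        · rintro ⟨hck, hmin'⟩
          obtain ⟨hm1, hm2⟩ := hmin'
          have h1 : c ≠ c0 := by
            rintro rfl
            rw [tb2] at hm2
            exact hm2 (Finset.mem_insert_self i _)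
          rw [tb3 0 c (by tauto)] at hm1 hm2
          exact ⟨h1, hck, hm1, hm2⟩
        · rintro ⟨h1, hck, hm1, hm2⟩
          refine ⟨hck, ?_, ?_⟩
          · rw [tb3 0 c (by tauto)]; exact hm1
          · rw [tb3 0 c (by tauto)]; exact hm2
      have hc0in : c0 ∈ (Finset.range k).filter (fun c => isMinus t i c) := by
        simp only [Finset.mem_filter, Finset.mem_range]
        exact ⟨hc0k, hm⟩
      rw [hset, Finset.card_erase_of_mem hc0in]
      have hpos : 0 < ((Finset.range k).filter (fun c => isMinus t i c)).card :=
        Finset.card_pos.mpr ⟨c0, hc0in⟩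
      omega

end EStep

section DemStepFlat

variable {n k i : ℕ} {t : Filling}

lemma demStep_flat (hn : 0 < n) (hi1 : 1 ≤ i) (hin : i < n) :
    ∀ N (t : Filling), IsSVT n (rowShape k) t → mcount k t i = N →
      DemStep n (rowShape k) (eK n (rowShape k)) i t (flat i t) := by
  intro N
  induction N using Nat.strong_induction_on with
  | _ N IH =>
  intro t ht hN
  have hrow : ∀ r c, r ≠ 0 → t r c = ∅ := fun r c hr => ht.rowEmpty c hr
  by_cases hminus : ∃ c, isMinus t i c
  · -- apply one eRaw step and use the induction hypothesis
    have hne : {c | isMinus t i c}.Nonempty := hminus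
    have hm : isMinus t i (sInf {c | isMinus t i c}) := Nat.sInf_mem hne
    have hmin : ∀ c', isMinus t i c' → sInf {c | isMinus t i c} ≤ c' :=
      fun c' h => Nat.sInf_le h
    obtain ⟨t', heR, ht', hflat, hmc⟩ := estep_props ht hn hi1 hin hm hmin
    have hlt : mcount k t' i < N := by omega
    obtain ⟨t1, ⟨⟨m, hiter⟩, hnone⟩, hK⟩ := IH (mcount k t' i) hlt t' ht' rfl
    refine ⟨t1, ⟨⟨m + 1, ?_⟩, hnone⟩, ?_⟩
    · rw [iterOpt_cons _ heR]; exact hiter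
    · rw [← hflat]; exact hK
  · push_neg at hminus
    have heRn : eRaw n (rowShape k) i t = none := eRaw_none ht hn hminus
    by_cases hmix : ∃ c, isMixed t i c
    · obtain ⟨cm, hcm⟩ := hmix
      have heK := eK_some ht hn hcm
      have hflatbox : updateBox t 0 cm ((t 0 cm).erase (i + 1)) = flat i t := by
        funext r c
        rcases Nat.eq_zero_or_pos r with rfl | hr0
        · by_cases h1 : c = cm
          · subst h1
            rw [updateBox_same]
            unfold flat
            rw [if_pos hcm.2]
            exact (Finset.insert_eq_self.mpr (Finset.mem_erase.mpr ⟨by omega, hcm.1⟩)).symm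
          · rw [updateBox_ne _ _ _ _ (by tauto)]
            unfold flat
            rw [if_neg]
            intro hh
            by_cases hi' : i ∈ t 0 c
            · exact h1 (mixed_unique ht ⟨hi', hh⟩ hcm)
            · exact hminus c ⟨hh, hi'⟩
        · rw [updateBox_ne _ _ _ _ (by omega)]
          unfold flat
          rw [if_neg]
          rw [hrow r c (by omega)]
          exact Finset.notMem_empty _
      have hrowflat : ∀ r c, r ≠ 0 → flat i t r c = ∅ :=
        fun r c hr => flat_empty (hrow r c hr)
      refine ⟨t, ⟨⟨0, rfl⟩, heRn⟩, ⟨1, ?_⟩, ?_⟩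
      · show (some t).bind (eK n (rowShape k) i) = some (flat i t)
        rw [Option.bind_some, heK, hflatbox]
      · exact eK_none hrowflat (fun c h => succ_not_mem_flat h.2)
    · push_neg at hmix
      have hfl : flat i t = t := by
        apply flat_eq_self
        intro r c hmem
        rcases Nat.eq_zero_or_pos r with rfl | hr0
        · by_cases hi' : i ∈ t 0 c
          · exact hmix c ⟨hi', hmem⟩
          · exact hminus c ⟨hmem, hi'⟩
        · rw [hrow r c (by omega)] at hmem
          exact absurd hmem (Finset.notMem_empty _)
      refine ⟨t, ⟨⟨0, rfl⟩, heRn⟩, ⟨0, by simp only [hfl]; rfl⟩, ?_⟩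
      rw [hfl]
      exact eK_none hrow (fun c h => hmix c ⟨h.1, h.2⟩)

lemma demStep_unique {eKop : ℕ → Filling → Option Filling} {a b : Filling}
    (ha : DemStep n (rowShape k) eKop i t a) (hb : DemStep n (rowShape k) eKop i t b) :
    a = b := by
  obtain ⟨t1, h1, h2⟩ := ha
  obtain ⟨t1', h1', h2'⟩ := hb
  have : t1 = t1' := maxApply_unique h1 h1'
  subst this
  exact maxApply_unique h2 h2'

end DemStepFlat

theorem Equiv.Perm.apply_inv_self {α : Type*} (f : Equiv.Perm α) (x : α) : f (f⁻¹ x) = x :=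
  Equiv.apply_symm_apply f x

theorem Equiv.Perm.inv_apply_self {α : Type*} (f : Equiv.Perm α) (x : α) : f⁻¹ (f x) = x :=
  Equiv.symm_apply_apply f x

section Inversions

variable {n : ℕ}

lemma wordPerm_nil : wordPerm [] = 1 := rfl

lemma wordPerm_cons (j : ℕ) (w : List ℕ) :
    wordPerm (j :: w) = Equiv.swap j (j + 1) * wordPerm w := by
  unfold wordPerm
  rw [List.map_cons, List.prod_cons]

/-- Number of inversions of a permutation on `{1, …, n}`. -/
def invN (n : ℕ) (u : Equiv.Perm ℕ) : ℕ :=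
  (((Finset.Icc 1 n) ×ˢ (Finset.Icc 1 n)).filter (fun p => p.1 < p.2 ∧ u p.2 < u p.1)).card

lemma swap_succ_lt {i a b : ℕ} (hab : a < b) (hne : ¬(a = i ∧ b = i + 1)) :
    Equiv.swap i (i + 1) a < Equiv.swap i (i + 1) b := by
  rw [Equiv.swap_apply_def, Equiv.swap_apply_def]
  split_ifs <;> omega

lemma perm_fix_outside {word : List ℕ} (hw : ∀ j ∈ word, 1 ≤ j ∧ j < n) :
    ∀ x, x ∉ Finset.Icc 1 n → wordPerm word x = x := by
  induction word with
  | nil => intro x _; rfl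
  | cons j w ih =>
    intro x hx
    have hj := hw j (List.mem_cons_self)
    have hx' := ih (fun a ha => hw a (List.mem_cons_of_mem _ ha)) x hx
    rw [wordPerm_cons, Equiv.Perm.mul_apply, hx']
    rw [Finset.mem_Icc] at hx
    exact Equiv.swap_apply_of_ne_of_ne (by omega) (by omega)

lemma perm_mem_Icc {word : List ℕ} (hw : ∀ j ∈ word, 1 ≤ j ∧ j < n) :
    ∀ x ∈ Finset.Icc 1 n, wordPerm word x ∈ Finset.Icc 1 n := by
  induction word with
  | nil => intro x hx; exact hx
  | cons j w ih =>
    intro x hx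
    have hj := hw j (List.mem_cons_self)
    have hx' := ih (fun a ha => hw a (List.mem_cons_of_mem _ ha)) x hx
    rw [wordPerm_cons, Equiv.Perm.mul_apply]
    rw [Finset.mem_Icc] at hx' ⊢
    rw [Equiv.swap_apply_def]
    split_ifs <;> omega

lemma inv_mem_Icc {u : Equiv.Perm ℕ} (hfix : ∀ x, x ∉ Finset.Icc 1 n → u x = x) :
    ∀ x ∈ Finset.Icc 1 n, u⁻¹ x ∈ Finset.Icc 1 n := by
  intro x hx
  by_contra hy
  have h1 := hfix _ hy
  have h2 : u (u⁻¹ x) = x := Equiv.Perm.apply_inv_self u x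
  rw [h1] at h2
  rw [h2] at hy
  exact hy hx

lemma invN_swap_le (u : Equiv.Perm ℕ) (i : ℕ) :
    invN n (Equiv.swap i (i + 1) * u) ≤ invN n u + 1 := by
  have hsub : ((Finset.Icc 1 n ×ˢ Finset.Icc 1 n).filter
      (fun p => p.1 < p.2 ∧ (Equiv.swap i (i+1) * u) p.2 < (Equiv.swap i (i+1) * u) p.1))
      ⊆ insert (u⁻¹ i, u⁻¹ (i + 1))
        ((Finset.Icc 1 n ×ˢ Finset.Icc 1 n).filter (fun p => p.1 < p.2 ∧ u p.2 < u p.1)) := by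
    intro p hp
    obtain ⟨hmem, hlt, hswap⟩ := Finset.mem_filter.mp hp
    rw [Equiv.Perm.mul_apply, Equiv.Perm.mul_apply] at hswap
    rw [Finset.mem_insert]
    rcases lt_trichotomy (u p.1) (u p.2) with h | h | h
    · by_cases hex : u p.1 = i ∧ u p.2 = i + 1
      · left
        have h1 : p.1 = u⁻¹ i := by rw [← hex.1, Equiv.Perm.inv_apply_self]
        have h2 : p.2 = u⁻¹ (i + 1) := by rw [← hex.2, Equiv.Perm.inv_apply_self]
        exact Prod.ext h1 h2
      · exfalso
        have := swap_succ_lt h hex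
        omega
    · exact absurd (u.injective h) (by omega)
    · exact Or.inr (Finset.mem_filter.mpr ⟨hmem, hlt, h⟩)
  calc _ ≤ (insert (u⁻¹ i, u⁻¹ (i + 1))
        ((Finset.Icc 1 n ×ˢ Finset.Icc 1 n).filter (fun p => p.1 < p.2 ∧ u p.2 < u p.1))).card :=
      Finset.card_le_card hsub
    _ ≤ _ + 1 := Finset.card_insert_le _ _

lemma invN_swap_lt {u : Equiv.Perm ℕ} {i : ℕ} (hi1 : 1 ≤ i) (hin : i < n)
    (hfix : ∀ x, x ∉ Finset.Icc 1 n → u x = x)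
    (hd : u⁻¹ (i + 1) < u⁻¹ i) :
    invN n (Equiv.swap i (i + 1) * u) < invN n u := by
  have hIccInv := inv_mem_Icc hfix
  set q0 : ℕ × ℕ := (u⁻¹ (i + 1), u⁻¹ i) with hq0def
  have hq0 : q0 ∈ (Finset.Icc 1 n ×ˢ Finset.Icc 1 n).filter
      (fun p => p.1 < p.2 ∧ u p.2 < u p.1) := by
    refine Finset.mem_filter.mpr ⟨Finset.mem_product.mpr ⟨?_, ?_⟩, hd, ?_⟩
    · exact hIccInv (i + 1) (Finset.mem_Icc.mpr ⟨by omega, by omega⟩)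
    · exact hIccInv i (Finset.mem_Icc.mpr ⟨by omega, by omega⟩)
    · show u (u⁻¹ i) < u (u⁻¹ (i + 1))
      rw [Equiv.Perm.apply_inv_self, Equiv.Perm.apply_inv_self]
      omega
  have hq0' : ¬(q0.1 < q0.2 ∧ (Equiv.swap i (i+1) * u) q0.2 < (Equiv.swap i (i+1) * u) q0.1) := by
    rintro ⟨-, hswap⟩
    rw [Equiv.Perm.mul_apply, Equiv.Perm.mul_apply] at hswap
    show False
    have e1 : u q0.2 = i := Equiv.Perm.apply_inv_self u i
    have e2 : u q0.1 = i + 1 := Equiv.Perm.apply_inv_self u (i + 1)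
    rw [e1, e2, Equiv.swap_apply_left, Equiv.swap_apply_right] at hswap
    omega
  have hsub : ((Finset.Icc 1 n ×ˢ Finset.Icc 1 n).filter
      (fun p => p.1 < p.2 ∧ (Equiv.swap i (i+1) * u) p.2 < (Equiv.swap i (i+1) * u) p.1))
      ⊆ ((Finset.Icc 1 n ×ˢ Finset.Icc 1 n).filter
        (fun p => p.1 < p.2 ∧ u p.2 < u p.1)).erase q0 := by
    intro p hp
    obtain ⟨hmem, hlt, hswap⟩ := Finset.mem_filter.mp hp
    refine Finset.mem_erase.mpr ⟨?_, ?_⟩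
    · rintro rfl
      exact hq0' ⟨hlt, (Finset.mem_filter.mp hp).2.2⟩
    · rw [Equiv.Perm.mul_apply, Equiv.Perm.mul_apply] at hswap
      rcases lt_trichotomy (u p.1) (u p.2) with h | h | h
      · by_cases hex : u p.1 = i ∧ u p.2 = i + 1
        · exfalso
          have h1 : p.1 = u⁻¹ i := by rw [← hex.1, Equiv.Perm.inv_apply_self]
          have h2 : p.2 = u⁻¹ (i + 1) := by rw [← hex.2, Equiv.Perm.inv_apply_self]
          rw [h1, h2] at hlt
          omega
        · exfalso
          have := swap_succ_lt h hex
          omega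
      · exact absurd (u.injective h) (by omega)
      · exact Finset.mem_filter.mpr ⟨hmem, hlt, h⟩
  calc _ ≤ _ := Finset.card_le_card hsub
    _ < _ := Finset.card_erase_lt_of_mem hq0

lemma invN_le_length (word : List ℕ) : invN n (wordPerm word) ≤ word.length := by
  induction word with
  | nil =>
    have : invN n (wordPerm []) = 0 := by
      rw [wordPerm_nil]
      unfold invN
      rw [Finset.card_eq_zero, Finset.filter_eq_empty_iff]
      rintro p -
      rw [Equiv.Perm.one_apply, Equiv.Perm.one_apply]
      omega
    omega
  | cons j w ih =>
    rw [wordPerm_cons]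
    calc invN n (Equiv.swap j (j+1) * wordPerm w) ≤ invN n (wordPerm w) + 1 :=
        invN_swap_le _ _
      _ ≤ w.length + 1 := by omega
      _ = (j :: w).length := by simp

lemma exists_word_invN (hn : 1 ≤ n) :
    ∀ N (u : Equiv.Perm ℕ), (∀ x, x ∉ Finset.Icc 1 n → u x = x) → invN n u ≤ N →
    ∃ word : List ℕ, (∀ j ∈ word, 1 ≤ j ∧ j < n) ∧ wordPerm word = u ∧
      word.length ≤ invN n u := by
  intro N
  induction N using Nat.strong_induction_on with
  | _ N IH =>
  intro u hfix hNle
  by_cases hdesc : ∃ i, 1 ≤ i ∧ i < n ∧ u⁻¹ (i + 1) < u⁻¹ i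
  · obtain ⟨i, hi1, hin, hd⟩ := hdesc
    set v := Equiv.swap i (i + 1) * u with hvdef
    have hfixv : ∀ x, x ∉ Finset.Icc 1 n → v x = x := by
      intro x hx
      rw [hvdef, Equiv.Perm.mul_apply, hfix x hx]
      rw [Finset.mem_Icc] at hx
      exact Equiv.swap_apply_of_ne_of_ne (by omega) (by omega)
    have hlt : invN n v < invN n u := invN_swap_lt hi1 hin hfix hd
    have hN1 : 1 ≤ N := by omega
    obtain ⟨wv, hlet, hperm, hlen⟩ := IH (N - 1) (by omega) v hfixv (by omega)
    refine ⟨i :: wv, ?_, ?_, ?_⟩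
    · intro a ha
      rcases List.mem_cons.mp ha with rfl | ha
      · exact ⟨hi1, hin⟩
      · exact hlet a ha
    · rw [wordPerm_cons, hperm, hvdef, ← mul_assoc, Equiv.swap_mul_self, one_mul]
    · simp only [List.length_cons]
      omega
  · push_neg at hdesc
    have hstrict : ∀ i, 1 ≤ i → i < n → u⁻¹ i < u⁻¹ (i + 1) := by
      intro i h1 h2
      have hle := hdesc i h1 h2
      have hne : u⁻¹ i ≠ u⁻¹ (i + 1) := fun h => by
        have := u⁻¹.injective h
        omega
      omega
    have hIccInv := inv_mem_Icc hfix
    have hlow : ∀ j, 1 ≤ j → j ≤ n → j ≤ u⁻¹ j := by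
      intro j
      induction j with
      | zero => omega
      | succ j ihj =>
        intro _ hjn
        rcases Nat.eq_zero_or_pos j with hj0 | hj0
        · have h0 : u 0 = 0 := hfix 0 (by simp)
          have hne : u⁻¹ (j + 1) ≠ 0 := by
            intro hh
            have e : u (u⁻¹ (j + 1)) = u 0 := by rw [hh]
            rw [Equiv.Perm.apply_inv_self, h0] at e
            omega
          omega
        · have h1 := ihj (by omega) (by omega)
          have h2 := hstrict j (by omega) (by omega)
          omega
    have hhigh : ∀ d j, j + d = n → 1 ≤ j → u⁻¹ j ≤ j := by
      intro d
      induction d with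
      | zero =>
        intro j hj h1
        have := hIccInv j (Finset.mem_Icc.mpr ⟨h1, by omega⟩)
        rw [Finset.mem_Icc] at this
        omega
      | succ d ihd =>
        intro j hj h1
        have h2 := hstrict j h1 (by omega)
        have h3 := ihd (j + 1) (by omega) (by omega)
        omega
    have hinvid : ∀ y, u⁻¹ y = y := by
      intro y
      by_cases hy : y ∈ Finset.Icc 1 n
      · rw [Finset.mem_Icc] at hy
        have := hlow y hy.1 hy.2
        have := hhigh (n - y) y (by omega) hy.1
        omega
      · have h1 := hfix y hy
        have h2 : u⁻¹ (u y) = u⁻¹ y := by rw [h1]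
        rw [Equiv.Perm.inv_apply_self] at h2
        exact h2.symm
    have hu : u = 1 := by
      ext x
      have h2 := hinvid (u x)
      rw [Equiv.Perm.inv_apply_self] at h2
      simp only [Equiv.Perm.one_apply]
      exact h2.symm
    exact ⟨[], by simp, by rw [wordPerm_nil, hu], by simp⟩

lemma reduced_tail {w : Equiv.Perm ℕ} {j : ℕ} {rest : List ℕ}
    (h : IsReducedWord n w (j :: rest)) : IsReducedWord n (wordPerm rest) rest := by
  obtain ⟨hlet, hperm, hmin⟩ := h
  refine ⟨fun a ha => hlet a (List.mem_cons_of_mem _ ha), rfl, ?_⟩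
  intro word' hlet' hperm'
  have hmm := hmin (j :: word') ?_ ?_
  · simp only [List.length_cons] at hmm
    omega
  · intro a ha
    rcases List.mem_cons.mp ha with heq | ha
    · subst heq
      exact hlet _ (List.mem_cons_self)
    · exact hlet' a ha
  · rw [wordPerm_cons, hperm', ← wordPerm_cons, hperm]

lemma key_no_descent {w : Equiv.Perm ℕ} {j : ℕ} {rest : List ℕ} (hn : 1 ≤ n)
    (h : IsReducedWord n w (j :: rest)) : j + 1 ≠ wordPerm rest 1 := by
  intro heq
  obtain ⟨hlet, hperm, hmin⟩ := h
  have hj := hlet j (List.mem_cons_self)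
  set u := wordPerm rest with hu
  have hletr : ∀ a ∈ rest, 1 ≤ a ∧ a < n := fun a ha => hlet a (List.mem_cons_of_mem _ ha)
  have hfix : ∀ x, x ∉ Finset.Icc 1 n → u x = x := perm_fix_outside hletr
  have hIccInv := inv_mem_Icc hfix
  have hinv1 : u⁻¹ (j + 1) = 1 := by rw [heq, Equiv.Perm.inv_apply_self]
  have hd : u⁻¹ (j + 1) < u⁻¹ j := by
    have h1 := hIccInv j (Finset.mem_Icc.mpr ⟨by omega, by omega⟩)
    rw [Finset.mem_Icc] at h1
    have h2 : u⁻¹ j ≠ 1 := by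
      intro hh
      have e1 : u (u⁻¹ j) = u 1 := by rw [hh]
      have e2 : u (u⁻¹ (j + 1)) = u 1 := by rw [hinv1]
      rw [Equiv.Perm.apply_inv_self] at e1 e2
      omega
    omega
  have hlt := invN_swap_lt hj.1 hj.2 hfix hd
  have hle := invN_le_length (n := n) rest
  rw [← hu] at hle
  have hw : w = Equiv.swap j (j + 1) * u := by rw [← hperm, wordPerm_cons]
  have hfixw : ∀ x, x ∉ Finset.Icc 1 n → w x = x := by
    rw [← hperm]
    exact perm_fix_outside hlet
  obtain ⟨word', hlet', hperm', hlen'⟩ :=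
    exists_word_invN hn (invN n w) w hfixw (le_refl _)
  have hmm := hmin word' hlet' hperm'
  rw [hw] at hlen'
  simp only [List.length_cons] at hmm
  omega

end Inversions

section KDemEq

variable {n k : ℕ}

lemma rowShape_ne {r : ℕ} (k : ℕ) (hr : r ≠ 0) : rowShape k r = 0 := by
  simp [rowShape, hr]

lemma uTab_isSVT (hn : 1 ≤ n) : IsSVT n (rowShape k) (uTab (rowShape k)) := by
  constructor
  · intro r c hc
    rw [uTab, if_pos hc]
    exact ⟨r + 1, Finset.mem_singleton_self _⟩
  · intro r c hc
    rw [uTab, if_neg hc]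
  · intro r c a ha
    rw [uTab] at ha
    split_ifs at ha with h
    · rw [Finset.mem_singleton] at ha
      subst ha
      have hr0 : r = 0 := by
        by_contra hr
        rw [rowShape_ne k hr] at h
        omega
      subst hr0
      omega
    · exact absurd ha (Finset.notMem_empty a)
  · intro r c a b ha hb
    rw [uTab] at ha hb
    split_ifs at ha hb with h1 h2
    · rw [Finset.mem_singleton] at ha hb
      omega
    all_goals first
      | exact absurd ha (Finset.notMem_empty a)
      | exact absurd hb (Finset.notMem_empty b)
  · intro r c a b ha hb
    rw [uTab] at hb
    split_ifs at hb with h1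
    · rw [rowShape_ne k (Nat.succ_ne_zero r)] at h1
      omega
    · exact absurd hb (Finset.notMem_empty b)

lemma uTab_mem_SM (hn : 1 ≤ n) : uTab (rowShape k) ∈ SM n k 1 := by
  refine ⟨uTab_isSVT hn, ?_⟩
  intro c a ha
  rw [uTab] at ha
  split_ifs at ha with h
  · rw [Finset.mem_singleton] at ha
    omega
  · exact absurd ha (Finset.notMem_empty a)

lemma SM_one (hn : 1 ≤ n) : SM n k 1 = {uTab (rowShape k)} := by
  ext t
  simp only [Set.mem_singleton_iff]
  constructor
  · rintro ⟨ht, hb⟩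
    funext r c
    rcases Nat.eq_zero_or_pos r with rfl | hr0
    · by_cases hc : c < k
      · have hne := ht.boxNonempty 0 c (by rw [rowShape_zero]; exact hc)
        have hsingle : t 0 c = {1} := by
          apply Finset.eq_singleton_iff_nonempty_unique_mem.mpr
          exact ⟨hne, fun x hx => le_antisymm (hb c x hx) (ht.entryBounds 0 c x hx).1⟩
        rw [hsingle, uTab, if_pos (by rw [rowShape_zero]; exact hc)]
      · rw [ht.colEmpty (by omega), uTab, if_neg (by rw [rowShape_zero]; exact hc)]
    · rw [ht.rowEmpty c (by omega), uTab, if_neg (by rw [rowShape_ne k (by omega)]; omega)]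
  · rintro rfl
    exact uTab_mem_SM hn

lemma flat_mem_SM_iff {i m : ℕ} {t : Filling} (ht : IsSVT n (rowShape k) t)
    (hi1 : 1 ≤ i) (hin : i < n) (hne : i + 1 ≠ m) :
    flat i t ∈ SM n k m ↔ t ∈ SM n k (Equiv.swap i (i + 1) m) := by
  have hflat : IsSVT n (rowShape k) (flat i t) := flat_isSVT ht hi1 hin
  simp only [SM, Set.mem_setOf_eq]
  constructor
  · rintro ⟨-, hb⟩
    refine ⟨ht, ?_⟩
    intro c a ha
    rw [Equiv.swap_apply_def]
    split_ifs with h1 h2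
    · by_contra hgt
      have hmem : a ∈ flat i t 0 c := mem_flat.mpr (Or.inl ⟨ha, by omega⟩)
      have := hb c a hmem
      omega
    · omega
    · by_cases haeq : a = i + 1
      · have hmem : i ∈ flat i t 0 c := mem_flat.mpr (Or.inr ⟨rfl, haeq ▸ ha⟩)
        have := hb c i hmem
        omega
      · have := hb c a (mem_flat.mpr (Or.inl ⟨ha, haeq⟩))
        omega
  · rintro ⟨-, hb⟩
    refine ⟨hflat, ?_⟩
    intro c a ha
    rcases mem_flat.mp ha with ⟨ham, hane⟩ | ⟨haeq, hmem⟩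
    · have := hb c a ham
      rw [Equiv.swap_apply_def] at this
      split_ifs at this <;> omega
    · have := hb c (i + 1) hmem
      rw [Equiv.swap_apply_def] at this
      split_ifs at this <;> omega

lemma demReach_cons {lam : ℕ → ℕ} {eKop : ℕ → Filling → Option Filling} {j : ℕ}
    {rest : List ℕ} {t u : Filling} :
    DemReach n lam eKop (j :: rest) t u ↔
      ∃ t2, DemStep n lam eKop j t t2 ∧ DemReach n lam eKop rest t2 u := Iff.rfl

lemma KDem_eq_SM (hn : 2 ≤ n) (hk : 1 ≤ k) :
    ∀ (word : List ℕ) (w : Equiv.Perm ℕ), IsReducedWord n w word →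
      KDem n (rowShape k) (eK n (rowShape k)) word = SM n k (wordPerm word 1) := by
  intro word
  induction word with
  | nil =>
    intro w hred
    have hval : wordPerm ([] : List ℕ) 1 = 1 := by rw [wordPerm_nil]; rfl
    rw [hval]
    ext t
    simp only [KDem, Set.mem_setOf_eq]
    constructor
    · rintro ⟨ht, hreach⟩
      have heq : t = uTab (rowShape k) := hreach
      rw [SM_one (by omega), heq]
      rfl
    · intro hmem
      rw [SM_one (by omega)] at hmem
      rw [Set.mem_singleton_iff] at hmem
      subst hmem
      exact ⟨uTab_isSVT (by omega), rfl⟩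
  | cons j rest ih =>
    intro w hred
    have hj := hred.1 j (List.mem_cons_self)
    have hrest := reduced_tail hred
    have hKrest := ih _ hrest
    have hne := key_no_descent (by omega) hred
    have hval : wordPerm (j :: rest) 1 = Equiv.swap j (j + 1) (wordPerm rest 1) := by
      rw [wordPerm_cons]; rfl
    ext t
    simp only [KDem, Set.mem_setOf_eq, demReach_cons]
    constructor
    · rintro ⟨ht, t2, hstep, hreach⟩
      have hflatstep := demStep_flat (by omega : 0 < n) hj.1 hj.2 (mcount k t j) t ht rfl
      have ht2 : t2 = flat j t := demStep_unique hstep hflatstep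
      subst ht2
      have hmem : flat j t ∈ KDem n (rowShape k) (eK n (rowShape k)) rest :=
        ⟨flat_isSVT ht hj.1 hj.2, hreach⟩
      rw [hKrest] at hmem
      have hfin := (flat_mem_SM_iff ht hj.1 hj.2 hne).mp hmem
      rw [hval]
      exact hfin
    · intro hmem
      rw [hval] at hmem
      have ht : IsSVT n (rowShape k) t := hmem.1
      have hfl : flat j t ∈ SM n k (wordPerm rest 1) :=
        (flat_mem_SM_iff ht hj.1 hj.2 hne).mpr hmem
      rw [← hKrest] at hfl
      exact ⟨ht, flat j t, demStep_flat (by omega : 0 < n) hj.1 hj.2 (mcount k t j) t ht rfl,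
        hfl.2⟩

end KDemEq

section Interval

variable {n k : ℕ} {u : Filling}

lemma convex_mem (ht : IsSVT n (rowShape k) u) {j c d e : ℕ} (h1 : j ∈ u 0 c) (h2 : j ∈ u 0 e)
    (hcd : c ≤ d) (hde : d ≤ e) : j ∈ u 0 d := by
  rcases eq_or_lt_of_le hcd with rfl | hcd
  · exact h1
  rcases eq_or_lt_of_le hde with rfl | hde
  · exact h2
  have hd : d < k := by have := ht.lt_of_mem h2; omega
  obtain ⟨x, hx⟩ := ht.boxNonempty 0 d (by rw [rowShape_zero]; exact hd)
  have hge := ht.row_mono hcd h1 hx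
  have hle := ht.row_mono hde hx h2
  have hxe : x = j := by omega
  rwa [← hxe]

lemma interval_char (ht : IsSVT n (rowShape k) u) (j : ℕ) :
    ∃ c1, ∀ c, j ∈ u 0 c ↔
      (c1 ≤ c ∧ c < c1 + ((Finset.range k).filter (fun c => j ∈ u 0 c)).card) := by
  set S := (Finset.range k).filter (fun c => j ∈ u 0 c) with hS
  have hmemS : ∀ c, c ∈ S ↔ j ∈ u 0 c := by
    intro c
    simp only [hS, Finset.mem_filter, Finset.mem_range]
    exact ⟨fun h => h.2, fun h => ⟨ht.lt_of_mem h, h⟩⟩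
  rcases S.eq_empty_or_nonempty with he | hne
  · refine ⟨0, fun c => ?_⟩
    rw [← hmemS, he]
    simp
  · have hicc : S = Finset.Icc (S.min' hne) (S.max' hne) := by
      ext c
      rw [Finset.mem_Icc]
      constructor
      · intro hc
        exact ⟨S.min'_le c hc, S.le_max' c hc⟩
      · rintro ⟨h1, h2⟩
        rw [hmemS]
        exact convex_mem ht ((hmemS _).mp (S.min'_mem hne)) ((hmemS _).mp (S.max'_mem hne)) h1 h2
    have hcard : S.card = S.max' hne + 1 - S.min' hne := by
      conv_lhs => rw [hicc]
      rw [Nat.card_Icc]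
    have hle : S.min' hne ≤ S.max' hne := S.min'_le _ (S.max'_mem hne)
    refine ⟨S.min' hne, fun c => ?_⟩
    rw [← hmemS]
    conv_lhs => rw [hicc]
    rw [Finset.mem_Icc]
    omega

end Interval

section Unflat

variable {n k : ℕ}

/-- Replace `i` by `i+1` in the last boxes of the `i`-interval, with a possible mixed box. -/
def unflat (i : ℕ) (u : Filling) (c1 g a e : ℕ) : Filling := fun r c =>
  if r = 0 ∧ c1 + a + e ≤ c ∧ c < c1 + g then insert (i + 1) ((u 0 c).erase i)
  else if r = 0 ∧ e = 1 ∧ c = c1 + a then insert (i + 1) (u 0 c)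
  else u r c

variable {i c1 g a e : ℕ} {u : Filling}

lemma unflat_row {r c : ℕ} (h : r ≠ 0) :
    unflat i u c1 g a e r c = u r c := by
  unfold unflat
  rw [if_neg (by tauto), if_neg (by tauto)]

lemma mem_unflat {x c : ℕ} :
    x ∈ unflat i u c1 g a e 0 c ↔
      ((c1 + a + e ≤ c ∧ c < c1 + g) ∧ (x = i + 1 ∨ (x ∈ u 0 c ∧ x ≠ i))) ∨
      ((e = 1 ∧ c = c1 + a) ∧ (x = i + 1 ∨ x ∈ u 0 c)) ∨
      (¬(c1 + a + e ≤ c ∧ c < c1 + g) ∧ ¬(e = 1 ∧ c = c1 + a) ∧ x ∈ u 0 c) := by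
  unfold unflat
  by_cases h1 : (0 : ℕ) = 0 ∧ c1 + a + e ≤ c ∧ c < c1 + g
  · rw [if_pos h1]
    simp only [Finset.mem_insert, Finset.mem_erase]
    constructor
    · rintro (rfl | ⟨hne, hmem⟩)
      · exact Or.inl ⟨h1.2, Or.inl rfl⟩
      · exact Or.inl ⟨h1.2, Or.inr ⟨hmem, hne⟩⟩
    · rintro (⟨-, (rfl | ⟨hmem, hne⟩)⟩ | ⟨⟨he1, hc⟩, -⟩ | ⟨hcon, -, -⟩)
      · exact Or.inl rfl
      · exact Or.inr ⟨hne, hmem⟩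
      · exfalso; obtain ⟨-, h2, h3⟩ := h1; omega
      · exact absurd h1.2 hcon
  · rw [if_neg h1]
    have h1' : ¬(c1 + a + e ≤ c ∧ c < c1 + g) := fun h => h1 ⟨rfl, h⟩
    by_cases h2 : (0 : ℕ) = 0 ∧ e = 1 ∧ c = c1 + a
    · rw [if_pos h2]
      simp only [Finset.mem_insert]
      constructor
      · rintro (rfl | hmem)
        · exact Or.inr (Or.inl ⟨h2.2, Or.inl rfl⟩)
        · exact Or.inr (Or.inl ⟨h2.2, Or.inr hmem⟩)
      · rintro (⟨hcon, -⟩ | ⟨-, (rfl | hmem)⟩ | ⟨-, hcon, -⟩)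
        · exact absurd hcon h1'
        · exact Or.inl rfl
        · exact Or.inr hmem
        · exact absurd h2.2 hcon
    · rw [if_neg h2]
      have h2' : ¬(e = 1 ∧ c = c1 + a) := fun h => h2 ⟨rfl, h⟩
      constructor
      · intro hmem
        exact Or.inr (Or.inr ⟨h1', h2', hmem⟩)
      · rintro (⟨hcon, -⟩ | ⟨hcon, -⟩ | ⟨-, -, hmem⟩)
        · exact absurd hcon h1'
        · exact absurd hcon h2'
        · exact hmem

end Unflat





section UnflatProps

variable {n k i c1 g a e : ℕ} {u : Filling}

lemma unflat_box_region1 {c : ℕ} (hc : c1 + a + e ≤ c ∧ c < c1 + g) :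
    unflat i u c1 g a e 0 c = insert (i + 1) ((u 0 c).erase i) := by
  unfold unflat
  rw [if_pos ⟨rfl, hc⟩]

lemma unflat_box_region2 {c : ℕ} (hc : e = 1 ∧ c = c1 + a) :
    unflat i u c1 g a e 0 c = insert (i + 1) (u 0 c) := by
  unfold unflat
  rw [if_neg (by omega), if_pos ⟨rfl, hc⟩]

lemma unflat_box_else {c : ℕ} (hc1 : ¬(c1 + a + e ≤ c ∧ c < c1 + g))
    (hc2 : ¬(e = 1 ∧ c = c1 + a)) :
    unflat i u c1 g a e 0 c = u 0 c := by
  unfold unflat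
  rw [if_neg (by tauto), if_neg (by tauto)]

variable (hu : IsSVT n (rowShape k) u) (hT : ∀ c, (i + 1) ∉ u 0 c)
  (hchar : ∀ c, i ∈ u 0 c ↔ (c1 ≤ c ∧ c < c1 + g)) (hae : a + e ≤ g) (he : e ≤ 1)

include hchar hae he in
lemma unflat_mem_i {c : ℕ} :
    i ∈ unflat i u c1 g a e 0 c ↔ (c1 ≤ c ∧ c < c1 + a + e) := by
  rw [mem_unflat]
  constructor
  · rintro (⟨hcb, (habs | ⟨hmem, hne⟩)⟩ | ⟨⟨he1, hceq⟩, (habs | hmem)⟩ | ⟨h1, h2, hmem⟩)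
    · omega
    · exact absurd rfl hne
    · omega
    · omega
    · have := (hchar c).mp hmem
      omega
  · rintro ⟨h1, h2⟩
    by_cases hreg2 : e = 1 ∧ c = c1 + a
    · exact Or.inr (Or.inl ⟨hreg2, Or.inr ((hchar c).mpr ⟨h1, by omega⟩)⟩)
    · exact Or.inr (Or.inr ⟨by omega, hreg2, (hchar c).mpr ⟨h1, by omega⟩⟩)

include hT hae he in
lemma unflat_mem_succ {c : ℕ} :
    (i + 1) ∈ unflat i u c1 g a e 0 c ↔ (c1 + a ≤ c ∧ c < c1 + g) := by
  rw [mem_unflat]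
  constructor
  · rintro (⟨hcb, -⟩ | ⟨⟨he1, hceq⟩, -⟩ | ⟨-, -, hmem⟩)
    · omega
    · omega
    · exact absurd hmem (hT c)
  · rintro ⟨h1, h2⟩
    by_cases hreg1 : c1 + a + e ≤ c
    · exact Or.inl ⟨⟨hreg1, h2⟩, Or.inl rfl⟩
    · exact Or.inr (Or.inl ⟨⟨by omega, by omega⟩, Or.inl rfl⟩)

lemma unflat_mem_other {x c : ℕ} (hx1 : x ≠ i) (hx2 : x ≠ i + 1) :
    x ∈ unflat i u c1 g a e 0 c ↔ x ∈ u 0 c := by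
  rw [mem_unflat]
  constructor
  · rintro (⟨-, (habs | ⟨hm, -⟩)⟩ | ⟨-, (habs | hm)⟩ | ⟨-, -, hm⟩) <;>
      first | exact absurd habs hx2 | exact hm
  · intro hm
    by_cases h1 : c1 + a + e ≤ c ∧ c < c1 + g
    · exact Or.inl ⟨h1, Or.inr ⟨hm, hx1⟩⟩
    · by_cases h2 : e = 1 ∧ c = c1 + a
      · exact Or.inr (Or.inl ⟨h2, Or.inr hm⟩)
      · exact Or.inr (Or.inr ⟨h1, h2, hm⟩)

include hu hchar in
lemma unflat_gk (hg : 0 < g) : c1 + g ≤ k := by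
  have hmem := (hchar (c1 + g - 1)).mpr ⟨by omega, by omega⟩
  have := hu.lt_of_mem hmem
  omega

include hu in
lemma unflat_rowzero : ∀ r c, r ≠ 0 → unflat i u c1 g a e r c = ∅ := by
  intro r c hr
  rw [unflat_row hr]
  exact hu.rowEmpty c hr

include hu hT hchar hae he in
lemma unflat_isSVT (hi1 : 1 ≤ i) (hin : i < n) : IsSVT n (rowShape k) (unflat i u c1 g a e) := by
  have hgk := unflat_gk hu hchar
  constructor
  · intro r c hc
    rcases Nat.eq_zero_or_pos r with rfl | hr0
    · unfold unflat
      split_ifs with h1 h2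
      · exact Finset.insert_nonempty _ _
      · exact Finset.insert_nonempty _ _
      · exact hu.boxNonempty 0 c hc
    · rw [unflat_row (by omega)]
      exact hu.boxNonempty r c hc
  · intro r c hc
    rcases Nat.eq_zero_or_pos r with rfl | hr0
    · rw [rowShape_zero] at hc
      rw [unflat_box_else, ]
      · exact hu.colEmpty (by omega)
      · rintro ⟨hb1, hb2⟩
        have := hgk (by omega)
        omega
      · rintro ⟨he1, hceq⟩
        have := hgk (by omega)
        omega
    · rw [unflat_row (by omega)]
      exact hu.emptyOutside r c hc
  · intro r c x hx
    rcases Nat.eq_zero_or_pos r with rfl | hr0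
    · rcases mem_unflat.mp hx with ⟨-, (heq | ⟨hm, -⟩)⟩ | ⟨-, (heq | hm)⟩ | ⟨-, -, hm⟩
      · omega
      · exact hu.entryBounds 0 c x hm
      · omega
      · exact hu.entryBounds 0 c x hm
      · exact hu.entryBounds 0 c x hm
    · rw [unflat_row (by omega)] at hx
      exact hu.entryBounds r c x hx
  · intro r c x y hx hy
    rcases Nat.eq_zero_or_pos r with rfl | hr0
    · have hxc : (x = i + 1 ∧ c1 + a ≤ c ∧ c < c1 + g) ∨ x ∈ u 0 c := by
        rcases mem_unflat.mp hx with ⟨hb, (heq | ⟨hm, -⟩)⟩ | ⟨hb, (heq | hm)⟩ | ⟨-, -, hm⟩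
        · exact Or.inl ⟨heq, by omega⟩
        · exact Or.inr hm
        · exact Or.inl ⟨heq, by omega⟩
        · exact Or.inr hm
        · exact Or.inr hm
      have hyc : (y = i + 1 ∧ c1 + a ≤ c + 1 ∧ c + 1 < c1 + g) ∨
          (y ∈ u 0 (c + 1) ∧ y ≠ i) ∨
          (y ∈ u 0 (c + 1) ∧ ¬(c1 + a + e ≤ c + 1 ∧ c + 1 < c1 + g)) := by
        rcases mem_unflat.mp hy with ⟨hb, (heq | ⟨hm, hne⟩)⟩ | ⟨hb, (heq | hm)⟩ | ⟨hb, -, hm⟩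
        · exact Or.inl ⟨heq, by omega⟩
        · exact Or.inr (Or.inl ⟨hm, hne⟩)
        · exact Or.inl ⟨heq, by omega⟩
        · exact Or.inr (Or.inr ⟨hm, by omega⟩)
        · exact Or.inr (Or.inr ⟨hm, hb⟩)
      rcases hxc with ⟨hxe, hxb⟩ | hxm
      · -- x = i + 1
        have hic : i ∈ u 0 c := (hchar c).mpr ⟨by omega, hxb.2⟩
        rcases hyc with ⟨hye, -⟩ | ⟨hym, hyne⟩ | ⟨hym, hreg⟩
        · omega
        · have hge := hu.rowWeak 0 c i y hic hym
          have : y ≠ i + 1 := fun hcon => hT (c + 1) (hcon ▸ hym)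
          omega
        · have hge := hu.rowWeak 0 c i y hic hym
          have hne1 : y ≠ i + 1 := fun hcon => hT (c + 1) (hcon ▸ hym)
          have hnei : y ≠ i := by
            intro hcon
            have := (hchar (c + 1)).mp (hcon ▸ hym)
            omega
          omega
      · rcases hyc with ⟨hye, hyb⟩ | ⟨hym, -⟩ | ⟨hym, -⟩
        · have hic : i ∈ u 0 (c + 1) := (hchar (c + 1)).mpr ⟨by omega, hyb.2⟩
          have := hu.rowWeak 0 c x i hxm hic
          omega
        · exact hu.rowWeak 0 c x y hxm hym
        · exact hu.rowWeak 0 c x y hxm hym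
    · rw [unflat_row (by omega)] at hx
      rw [unflat_row (by omega)] at hy
      exact hu.rowWeak r c x y hx hy
  · intro r c x y _ hy
    rw [unflat_row (Nat.succ_ne_zero r), hu.rowEmpty c (Nat.succ_ne_zero r)] at hy
    exact absurd hy (Finset.notMem_empty _)

include hu hT hchar hae he in
lemma flat_unflat : flat i (unflat i u c1 g a e) = u := by
  funext r c
  rcases Nat.eq_zero_or_pos r with rfl | hr0
  · unfold SVTCrystal.flat
    by_cases hmem : (i + 1) ∈ unflat i u c1 g a e 0 c
    · rw [if_pos hmem]
      have hbb := (unflat_mem_succ hT hae he).mp hmem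
      ext x
      simp only [Finset.mem_insert, Finset.mem_erase]
      constructor
      · rintro (heq | ⟨hne, hx⟩)
        · subst heq
          exact (hchar c).mpr ⟨by omega, hbb.2⟩
        · rcases mem_unflat.mp hx with ⟨-, (habs | ⟨hm, -⟩)⟩ | ⟨-, (habs | hm)⟩ | ⟨-, -, hm⟩
          · exact absurd habs hne
          · exact hm
          · exact absurd habs hne
          · exact hm
          · exact hm
      · intro hx
        by_cases hxi : x = i
        · exact Or.inl hxi
        · have hxne : x ≠ i + 1 := fun hcon => hT c (hcon ▸ hx)
          exact Or.inr ⟨hxne, (unflat_mem_other hxi hxne).mpr hx⟩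
    · rw [if_neg hmem]
      have hbb : ¬(c1 + a ≤ c ∧ c < c1 + g) :=
        fun h => hmem ((unflat_mem_succ hT hae he).mpr h)
      ext x
      by_cases hxi : x = i
      · subst hxi
        rw [unflat_mem_i hchar hae he, hchar c]
        omega
      · by_cases hxs : x = i + 1
        · subst hxs
          constructor
          · intro hcon; exact absurd hcon hmem
          · intro hcon; exact absurd hcon (hT c)
        · exact unflat_mem_other hxi hxs
  · unfold SVTCrystal.flat
    rw [unflat_row (by omega)]
    have hh : (i + 1) ∉ u r c := by
      rw [hu.rowEmpty c (by omega)]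
      exact Finset.notMem_empty _
    rw [if_neg hh]

include hu hT hchar hae he in
lemma wt_unflat_other (hn : 0 < n) {j : ℕ} (hj1 : j ≠ i) (hj2 : j ≠ i + 1) :
    wt n (rowShape k) (unflat i u c1 g a e) j = wt n (rowShape k) u j := by
  rw [wt_eq hn (unflat_rowzero hu), wt_eq hn (fun r c hr => hu.rowEmpty c hr)]
  congr 1
  apply Finset.filter_congr
  intro c _
  exact unflat_mem_other hj1 hj2

include hu hT hchar hae he in
lemma wt_unflat_i (hn : 0 < n) :
    wt n (rowShape k) (unflat i u c1 g a e) i = a + e := by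
  rw [wt_eq hn (unflat_rowzero hu)]
  have hgk := unflat_gk hu hchar
  have hset : (Finset.range k).filter (fun c => i ∈ unflat i u c1 g a e 0 c)
      = Finset.Ico c1 (c1 + a + e) := by
    ext c
    simp only [Finset.mem_filter, Finset.mem_range, Finset.mem_Ico]
    constructor
    · rintro ⟨hck, hm⟩
      exact (unflat_mem_i hchar hae he).mp hm
    · rintro ⟨h1, h2⟩
      have hk' := hgk (by omega)
      exact ⟨by omega, (unflat_mem_i hchar hae he).mpr ⟨h1, h2⟩⟩
  rw [hset, Nat.card_Ico]
  omega

include hu hT hchar hae he in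
lemma wt_unflat_succ (hn : 0 < n) :
    wt n (rowShape k) (unflat i u c1 g a e) (i + 1) = g - a := by
  rw [wt_eq hn (unflat_rowzero hu)]
  have hgk := unflat_gk hu hchar
  have hset : (Finset.range k).filter (fun c => (i + 1) ∈ unflat i u c1 g a e 0 c)
      = Finset.Ico (c1 + a) (c1 + g) := by
    ext c
    simp only [Finset.mem_filter, Finset.mem_range, Finset.mem_Ico]
    constructor
    · rintro ⟨hck, hm⟩
      exact (unflat_mem_succ hT hae he).mp hm
    · rintro ⟨h1, h2⟩
      have hk' := hgk (by omega)
      exact ⟨by omega, (unflat_mem_succ hT hae he).mpr ⟨h1, h2⟩⟩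
  rw [hset, Nat.card_Ico]
  omega

include hu hT hchar hae he in
lemma excess_unflat (hn : 0 < n) :
    excess n (rowShape k) (unflat i u c1 g a e) = excess n (rowShape k) u + e := by
  have hgk := unflat_gk hu hchar
  rw [excess_eq hn (unflat_rowzero hu), excess_eq hn (fun r c hr => hu.rowEmpty c hr)]
  have hcard1 : ∀ c, c1 + a + e ≤ c → c < c1 + g →
      (unflat i u c1 g a e 0 c).card = (u 0 c).card := by
    intro c h1 h2
    rw [unflat_box_region1 ⟨h1, h2⟩]
    have himem : i ∈ u 0 c := (hchar c).mpr ⟨by omega, h2⟩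
    rw [Finset.card_insert_of_notMem (fun hcon => hT c (Finset.mem_of_mem_erase hcon)),
      Finset.card_erase_of_mem himem]
    have : 0 < (u 0 c).card := Finset.card_pos.mpr ⟨i, himem⟩
    omega
  rcases Nat.eq_zero_or_pos e with rfl | he1
  · rw [Nat.add_zero]
    apply Finset.sum_congr rfl
    intro c _
    by_cases h1 : c1 + a + 0 ≤ c ∧ c < c1 + g
    · rw [hcard1 c h1.1 h1.2]
    · rw [unflat_box_else h1 (by omega)]
  · have he1' : e = 1 := by omega
    subst he1'
    have hmem : c1 + a ∈ Finset.range k := by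
      rw [Finset.mem_range]
      have := hgk (by omega)
      omega
    rw [← Finset.add_sum_erase _ _ hmem, ← Finset.add_sum_erase _ (fun c => (u 0 c).card - 1) hmem]
    have h1 : (unflat i u c1 g a 1 0 (c1 + a)).card = (u 0 (c1 + a)).card + 1 := by
      rw [unflat_box_region2 ⟨rfl, rfl⟩]
      exact Finset.card_insert_of_notMem (hT _)
    have h2 : ∀ c ∈ (Finset.range k).erase (c1 + a),
        (unflat i u c1 g a 1 0 c).card - 1 = (u 0 c).card - 1 := by
      intro c hc
      have hcne : c ≠ c1 + a := (Finset.mem_erase.mp hc).1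
      by_cases hr1 : c1 + a + 1 ≤ c ∧ c < c1 + g
      · rw [hcard1 c hr1.1 hr1.2]
      · rw [unflat_box_else hr1 (by omega)]
    rw [Finset.sum_congr rfl h2, h1]
    have hupos : 0 < (u 0 (c1 + a)).card := by
      apply Finset.card_pos.mpr
      exact ⟨i, (hchar _).mpr ⟨by omega, by omega⟩⟩
    omega

include hu hT hchar hae he in
lemma unflat_aOf :
    ((Finset.range k).filter
      (fun c => i ∈ unflat i u c1 g a e 0 c ∧ (i + 1) ∉ unflat i u c1 g a e 0 c)).card = a := by
  have hgk := unflat_gk hu hchar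
  have hset : (Finset.range k).filter
      (fun c => i ∈ unflat i u c1 g a e 0 c ∧ (i + 1) ∉ unflat i u c1 g a e 0 c)
      = Finset.Ico c1 (c1 + a) := by
    ext c
    simp only [Finset.mem_filter, Finset.mem_range, Finset.mem_Ico]
    rw [unflat_mem_i hchar hae he, unflat_mem_succ hT hae he]
    constructor
    · rintro ⟨hck, h1, h2⟩
      omega
    · rintro ⟨h1, h2⟩
      have hk' := hgk (by omega)
      refine ⟨by omega, ⟨h1, by omega⟩, ?_⟩
      omega
  rw [hset, Nat.card_Ico]
  omega

include hu hT hchar hae he in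
lemma unflat_eOf :
    ((Finset.range k).filter
      (fun c => i ∈ unflat i u c1 g a e 0 c ∧ (i + 1) ∈ unflat i u c1 g a e 0 c)).card = e := by
  have hgk := unflat_gk hu hchar
  have hset : (Finset.range k).filter
      (fun c => i ∈ unflat i u c1 g a e 0 c ∧ (i + 1) ∈ unflat i u c1 g a e 0 c)
      = Finset.Ico (c1 + a) (c1 + a + e) := by
    ext c
    simp only [Finset.mem_filter, Finset.mem_range, Finset.mem_Ico]
    rw [unflat_mem_i hchar hae he, unflat_mem_succ hT hae he]
    constructor
    · rintro ⟨hck, h1, h2⟩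
      omega
    · rintro ⟨h1, h2⟩
      have hk' := hgk (by omega)
      refine ⟨by omega, ⟨by omega, by omega⟩, ⟨by omega, by omega⟩⟩
  rw [hset, Nat.card_Ico]
  omega

end UnflatProps

section Structure

variable {n k i : ℕ} {u t : Filling}

lemma fiber_structure (hn : 0 < n) (hu : IsSVT n (rowShape k) u)
    (hT : ∀ c, (i + 1) ∉ u 0 c) {c1 g : ℕ}
    (hchar : ∀ c, i ∈ u 0 c ↔ (c1 ≤ c ∧ c < c1 + g))
    (hg : ((Finset.range k).filter (fun c => i ∈ u 0 c)).card = g)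
    (ht : IsSVT n (rowShape k) t) (hflatt : flat i t = u) :
    ∃ a e, e ≤ 1 ∧ a + e ≤ g ∧ t = unflat i u c1 g a e ∧
      ((Finset.range k).filter (fun c => i ∈ t 0 c ∧ (i + 1) ∉ t 0 c)).card = a ∧
      ((Finset.range k).filter (fun c => i ∈ t 0 c ∧ (i + 1) ∈ t 0 c)).card = e := by
  classical
  have hbox : ∀ r c, u r c = flat i t r c := fun r c => by rw [hflatt]
  have f1 : ∀ c, i ∈ u 0 c ↔ (i ∈ t 0 c ∨ (i + 1) ∈ t 0 c) := by
    intro c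
    rw [hbox 0 c, mem_flat]
    constructor
    · rintro (⟨hm, -⟩ | ⟨-, hm⟩)
      · exact Or.inl hm
      · exact Or.inr hm
    · rintro (hm | hm)
      · exact Or.inl ⟨hm, by omega⟩
      · exact Or.inr ⟨rfl, hm⟩
  set P := (Finset.range k).filter (fun c => i ∈ t 0 c) with hPdef
  set Q := (Finset.range k).filter (fun c => (i + 1) ∈ t 0 c) with hQdef
  set Ao := (Finset.range k).filter (fun c => i ∈ t 0 c ∧ (i + 1) ∉ t 0 c) with hAdef
  set B := (Finset.range k).filter (fun c => i ∈ t 0 c ∧ (i + 1) ∈ t 0 c) with hBdef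
  set p := P.card
  set q := Q.card
  set A := Ao.card
  set E := B.card
  have hE1 : E ≤ 1 := by
    apply Finset.card_le_one.mpr
    intro c hc c' hc'
    simp only [hBdef, Finset.mem_filter] at hc hc'
    exact mixed_unique ht ⟨hc.2.1, hc.2.2⟩ ⟨hc'.2.1, hc'.2.2⟩
  have hPA : p = A + E := by
    have hsplit : P = Ao ∪ B := by
      ext c
      simp only [hPdef, hAdef, hBdef, Finset.mem_filter, Finset.mem_union]
      tauto
    have hdisj : Disjoint Ao B := by
      rw [Finset.disjoint_left]
      intro c hc hc'
      simp only [hAdef, hBdef, Finset.mem_filter] at hc hc'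
      exact hc.2.2 hc'.2.2
    rw [show p = P.card from rfl, hsplit, Finset.card_union_of_disjoint hdisj]
  have hEq : E ≤ q := by
    apply Finset.card_le_card
    intro c hc
    simp only [hBdef, hQdef, Finset.mem_filter] at hc ⊢
    exact ⟨hc.1, hc.2.2⟩
  have hEp : E ≤ p := by
    apply Finset.card_le_card
    intro c hc
    simp only [hBdef, hPdef, Finset.mem_filter] at hc ⊢
    exact ⟨hc.1, hc.2.1⟩
  have hunion : (Finset.range k).filter (fun c => i ∈ u 0 c) = P ∪ Q := by
    ext c
    simp only [hPdef, hQdef, Finset.mem_filter, Finset.mem_union]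
    have := f1 c
    tauto
  have hcap : P ∩ Q = B := by
    ext c
    simp only [hPdef, hQdef, hBdef, Finset.mem_filter, Finset.mem_inter]
    tauto
  have hall : g + E = p + q := by
    have := Finset.card_union_add_card_inter P Q
    rw [hcap, ← hunion, hg] at this
    exact this
  obtain ⟨d1, hPchar0⟩ := interval_char ht i
  obtain ⟨d2, hQchar0⟩ := interval_char ht (i + 1)
  rw [← hPdef] at hPchar0
  rw [← hQdef] at hQchar0
  have hPchar : ∀ c, i ∈ t 0 c ↔ (d1 ≤ c ∧ c < d1 + p) := hPchar0
  have hQchar : ∀ c, (i + 1) ∈ t 0 c ↔ (d2 ≤ c ∧ c < d2 + q) := hQchar0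
  have f2 : ∀ c c', i ∈ t 0 c → (i + 1) ∈ t 0 c' → c ≤ c' := by
    intro c c' h1 h2
    by_contra hcon
    have := ht.row_mono (by omega : c' < c) h2 h1
    omega
  have hP' : ∀ c, i ∈ t 0 c ↔ (c1 ≤ c ∧ c < c1 + p) := by
    rcases Nat.eq_zero_or_pos p with hp0 | hp1
    · intro c
      rw [hPchar c, hp0]
      omega
    · have hd1P : i ∈ t 0 d1 := (hPchar d1).mpr ⟨le_refl _, by omega⟩
      have hled : c1 ≤ d1 := ((hchar d1).mp ((f1 d1).mpr (Or.inl hd1P))).1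
      have hc1u : i ∈ u 0 c1 := (hchar c1).mpr ⟨le_refl _, by omega⟩
      have hged : d1 ≤ c1 := by
        rcases (f1 c1).mp hc1u with hm | hm
        · exact ((hPchar c1).mp hm).1
        · exact f2 d1 c1 hd1P hm
      have hd1c1 : d1 = c1 := by omega
      intro c
      rw [hPchar c]
      omega
  have hQ' : ∀ c, (i + 1) ∈ t 0 c ↔ (c1 + A ≤ c ∧ c < c1 + g) := by
    rcases Nat.eq_zero_or_pos q with hq0 | hq1
    · intro c
      rw [hQchar c, hq0]
      omega
    · have hd2Q : (i + 1) ∈ t 0 d2 := (hQchar d2).mpr ⟨le_refl _, by omega⟩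
      have hsubQ : ∀ c, (i + 1) ∈ t 0 c → (c1 ≤ c ∧ c < c1 + g) := by
        intro c hm
        exact (hchar c).mp ((f1 c).mpr (Or.inr hm))
      have htopb : (i + 1) ∈ t 0 (d2 + q - 1) := (hQchar _).mpr ⟨by omega, by omega⟩
      have hub : d2 + q ≤ c1 + g := by
        have := (hsubQ _ htopb).2
        omega
      have heq2 : d2 + q = c1 + g := by
        by_contra hcon
        have hlt : d2 + q < c1 + g := by omega
        have htop : i ∈ u 0 (c1 + g - 1) := (hchar _).mpr ⟨by omega, by omega⟩
        have hit : i ∈ t 0 (c1 + g - 1) := by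
          rcases (f1 _).mp htop with hm | hm
          · exact hm
          · have := (hQchar _).mp hm
            omega
        have := f2 _ _ hit hd2Q
        have := (hsubQ d2 hd2Q).2
        omega
      intro c
      rw [hQchar c]
      omega
  refine ⟨A, E, hE1, by omega, ?_, rfl, rfl⟩
  funext r c
  rcases Nat.eq_zero_or_pos r with rfl | hr0
  · by_cases hR2 : c1 + A + E ≤ c ∧ c < c1 + g
    · rw [unflat_box_region1 hR2]
      have hQm : (i + 1) ∈ t 0 c := (hQ' c).mpr ⟨by omega, hR2.2⟩
      have hPm : i ∉ t 0 c := by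
        rw [hP' c]
        omega
      have hub : u 0 c = insert i ((t 0 c).erase (i + 1)) := by
        rw [hbox 0 c]
        unfold SVTCrystal.flat
        rw [if_pos hQm]
      rw [hub, Finset.erase_insert (by simp [hPm] : i ∉ (t 0 c).erase (i + 1)),
        Finset.insert_erase hQm]
    · by_cases hRM : E = 1 ∧ c = c1 + A
      · rw [unflat_box_region2 hRM]
        have hQm : (i + 1) ∈ t 0 c := (hQ' c).mpr ⟨by omega, by omega⟩
        have hPm : i ∈ t 0 c := (hP' c).mpr ⟨by omega, by omega⟩
        have hub : u 0 c = insert i ((t 0 c).erase (i + 1)) := by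
          rw [hbox 0 c]
          unfold SVTCrystal.flat
          rw [if_pos hQm]
        have hin : insert i ((t 0 c).erase (i + 1)) = (t 0 c).erase (i + 1) :=
          Finset.insert_eq_self.mpr (Finset.mem_erase.mpr ⟨by omega, hPm⟩)
        rw [hub, hin, Finset.insert_erase hQm]
      · rw [unflat_box_else hR2 hRM]
        have hQm : (i + 1) ∉ t 0 c := by
          rw [hQ' c]
          omega
        rw [hbox 0 c]
        unfold SVTCrystal.flat
        rw [if_neg hQm]
  · rw [unflat_row (by omega), hbox r c]
    unfold SVTCrystal.flat
    have hh : (i + 1) ∉ t r c := by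
      rw [ht.rowEmpty c (by omega)]
      exact Finset.notMem_empty _
    rw [if_neg hh]

end Structure







open MvPolynomial

section PolyBasics

/-- The "string" generating polynomial. -/
def Gp (i g : ℕ) : KPoly :=
  (∑ a ∈ Finset.range (g + 1), (X i : KPoly) ^ a * (X (i + 1) : KPoly) ^ (g - a)) +
    betaP * X i * X (i + 1) *
      (∑ a ∈ Finset.range g, (X i : KPoly) ^ a * (X (i + 1) : KPoly) ^ (g - 1 - a))

/-- The part of a tableau monomial not involving `x_i, x_{i+1}`. -/
def cmon (n k i : ℕ) (u : Filling) : KPoly :=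
  betaP ^ excess n (rowShape k) u *
    ∏ j ∈ ((Finset.Icc 1 n).erase i).erase (i + 1),
      (X j : KPoly) ^ wt n (rowShape k) u j

lemma G_identity (i g : ℕ) :
    ((X i : KPoly) - X (i + 1)) * Gp i g =
      (X i + betaP * X i * X (i + 1)) * (X i : KPoly) ^ g -
      (X (i + 1) + betaP * X i * X (i + 1)) * (X (i + 1) : KPoly) ^ g := by
  have h1 := geom_sum₂_mul (X i : KPoly) (X (i + 1)) (g + 1)
  have h2 := geom_sum₂_mul (X i : KPoly) (X (i + 1)) g
  simp only [Nat.add_sub_cancel] at h1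
  unfold Gp
  linear_combination h1 + betaP * (X i : KPoly) * X (i + 1) * h2

lemma Ig_sum (i g : ℕ) :
    ∑ pr ∈ ((Finset.range (g + 1)) ×ˢ (Finset.range 2)).filter (fun pr => pr.1 + pr.2 ≤ g),
      (betaP ^ pr.2 * ((X i : KPoly) ^ (pr.1 + pr.2) * (X (i + 1) : KPoly) ^ (g - pr.1)))
      = Gp i g := by
  have hsplit : ((Finset.range (g + 1)) ×ˢ (Finset.range 2)).filter (fun pr => pr.1 + pr.2 ≤ g)
      = (Finset.range (g + 1)) ×ˢ {0} ∪ (Finset.range g) ×ˢ {1} := by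
    ext ⟨a, e⟩
    simp only [Finset.mem_filter, Finset.mem_product, Finset.mem_range, Finset.mem_union,
      Finset.mem_singleton]
    omega
  have hdisj : Disjoint ((Finset.range (g + 1)) ×ˢ ({0} : Finset ℕ))
      ((Finset.range g) ×ˢ ({1} : Finset ℕ)) := by
    rw [Finset.disjoint_left]
    rintro ⟨a, e⟩ h1 h2
    simp only [Finset.mem_product, Finset.mem_singleton] at h1 h2
    omega
  rw [hsplit, Finset.sum_union hdisj, Finset.sum_product, Finset.sum_product]
  simp only [Finset.sum_singleton]
  unfold Gp
  congr 1
  · apply Finset.sum_congr rfl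
    intro a _
    rw [pow_zero, one_mul, Nat.add_zero]
  · rw [Finset.mul_sum]
    apply Finset.sum_congr rfl
    intro a ha
    rw [Finset.mem_range] at ha
    rw [pow_one, show g - a = (g - 1 - a) + 1 by omega]
    ring

lemma charSet_eq_sum {n k : ℕ} {S : Set Filling} (hfin : S.Finite) :
    charSet n (rowShape k) S =
      ∑ t ∈ hfin.toFinset, betaP ^ excess n (rowShape k) t * xwt n (rowShape k) t := by
  unfold charSet
  rw [← finsum_mem_coe_finset, Set.Finite.coe_toFinset]

lemma xwt_split {n k : ℕ} (i : ℕ) (hi1 : 1 ≤ i) (hin : i < n) (t : Filling) :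
    xwt n (rowShape k) t =
      (X i : KPoly) ^ wt n (rowShape k) t i *
        (X (i + 1) : KPoly) ^ wt n (rowShape k) t (i + 1) *
        ∏ j ∈ ((Finset.Icc 1 n).erase i).erase (i + 1),
          (X j : KPoly) ^ wt n (rowShape k) t j := by
  unfold xwt
  rw [← Finset.mul_prod_erase _ _ (Finset.mem_Icc.mpr ⟨hi1, by omega⟩ : i ∈ Finset.Icc 1 n),
    ← Finset.mul_prod_erase _ _ (Finset.mem_erase.mpr
      ⟨by omega, Finset.mem_Icc.mpr ⟨by omega, by omega⟩⟩ : (i + 1) ∈ (Finset.Icc 1 n).erase i)]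
  ring

lemma rename_betaP (σ : ℕ → ℕ) : rename σ betaP = betaP := rename_C _ _

lemma rename_cmon {n k i : ℕ} (u : Filling) :
    rename (Equiv.swap i (i + 1)) (cmon n k i u) = cmon n k i u := by
  unfold cmon
  rw [map_mul, map_pow, rename_betaP, map_prod]
  congr 1
  apply Finset.prod_congr rfl
  intro j hj
  rw [map_pow, rename_X]
  have hj1 := (Finset.mem_erase.mp hj).1
  have hj2 := (Finset.mem_erase.mp (Finset.mem_erase.mp hj).2).1
  rw [Equiv.swap_apply_of_ne_of_ne hj2 hj1]

lemma rename_Gp (i g : ℕ) :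
    rename (Equiv.swap i (i + 1)) (Gp i g) = Gp i g := by
  unfold Gp
  rw [map_add, map_mul, map_mul, map_mul, rename_betaP, map_sum, map_sum, rename_X, rename_X,
    Equiv.swap_apply_left, Equiv.swap_apply_right]
  have e1 : ∑ a ∈ Finset.range (g + 1),
      rename (Equiv.swap i (i + 1)) ((X i : KPoly) ^ a * (X (i + 1) : KPoly) ^ (g - a))
      = ∑ a ∈ Finset.range (g + 1), (X i : KPoly) ^ a * (X (i + 1) : KPoly) ^ (g - a) := by
    have hmid : ∑ a ∈ Finset.range (g + 1),
        rename (Equiv.swap i (i + 1)) ((X i : KPoly) ^ a * (X (i + 1) : KPoly) ^ (g - a))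
        = ∑ a ∈ Finset.range (g + 1), (X (i + 1) : KPoly) ^ a * (X i : KPoly) ^ (g - a) := by
      apply Finset.sum_congr rfl
      intro a _
      rw [map_mul, map_pow, map_pow, rename_X, rename_X, Equiv.swap_apply_left,
        Equiv.swap_apply_right]
    rw [hmid]
    have hrefl := Finset.sum_range_reflect
      (fun a => (X (i + 1) : KPoly) ^ a * (X i : KPoly) ^ (g - a)) (g + 1)
    rw [← hrefl]
    apply Finset.sum_congr rfl
    intro a ha
    rw [Finset.mem_range] at ha
    rw [show g + 1 - 1 - a = g - a by omega, show g - (g - a) = a by omega]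
    ring
  have e2 : ∑ a ∈ Finset.range g,
      rename (Equiv.swap i (i + 1)) ((X i : KPoly) ^ a * (X (i + 1) : KPoly) ^ (g - 1 - a))
      = ∑ a ∈ Finset.range g, (X i : KPoly) ^ a * (X (i + 1) : KPoly) ^ (g - 1 - a) := by
    have hmid : ∑ a ∈ Finset.range g,
        rename (Equiv.swap i (i + 1)) ((X i : KPoly) ^ a * (X (i + 1) : KPoly) ^ (g - 1 - a))
        = ∑ a ∈ Finset.range g, (X (i + 1) : KPoly) ^ a * (X i : KPoly) ^ (g - 1 - a) := by
      apply Finset.sum_congr rfl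
      intro a _
      rw [map_mul, map_pow, map_pow, rename_X, rename_X, Equiv.swap_apply_left,
        Equiv.swap_apply_right]
    rw [hmid]
    have hrefl := Finset.sum_range_reflect
      (fun a => (X (i + 1) : KPoly) ^ a * (X i : KPoly) ^ (g - 1 - a)) g
    rw [← hrefl]
    apply Finset.sum_congr rfl
    intro a ha
    rw [Finset.mem_range] at ha
    rw [show g - 1 - (g - 1 - a) = a by omega]
    ring
  rw [e1, e2]
  ring

lemma X_sub_X_ne (i : ℕ) : ((X i : KPoly) - X (i + 1)) ≠ 0 := by
  intro h
  have h2 := congrArg (eval (fun j => if j = i then (1 : Polynomial ℤ) else 0)) h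
  rw [map_sub, eval_X, eval_X, map_zero, if_pos rfl, if_neg (by omega)] at h2
  simp at h2

end PolyBasics

section FiberSum

variable {n k : ℕ}

lemma wt_zero_of_none {j : ℕ} {t : Filling} (hn : 0 < n)
    (hrow : ∀ r c, r ≠ 0 → t r c = ∅) (hnone : ∀ c, j ∉ t 0 c) :
    wt n (rowShape k) t j = 0 := by
  rw [wt_eq hn hrow, Finset.card_eq_zero, Finset.filter_eq_empty_iff]
  intro c _
  exact hnone c

lemma fiber_sum {i M : ℕ} (hn : 0 < n) (hi1 : 1 ≤ i) (hin : i < n) (hiM : i + 1 ≤ M)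
    {u : Filling}
    (hu : u ∈ (finite_SM n k M).toFinset.filter (fun u => ∀ c, (i + 1) ∉ u 0 c)) :
    ∑ t ∈ (finite_SM n k M).toFinset.filter (fun t => flat i t = u),
        betaP ^ excess n (rowShape k) t * xwt n (rowShape k) t
      = cmon n k i u * Gp i (wt n (rowShape k) u i) := by
  rw [Finset.mem_filter, Set.Finite.mem_toFinset] at hu
  obtain ⟨⟨huSVT, hub⟩, hT⟩ := hu
  set g := wt n (rowShape k) u i with hgdef
  obtain ⟨c1, hchar0⟩ := interval_char huSVT i
  have hgcard : ((Finset.range k).filter (fun c => i ∈ u 0 c)).card = g := by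
    rw [hgdef, wt_eq hn (fun r c hr => huSVT.rowEmpty c hr)]
  have hchar : ∀ c, i ∈ u 0 c ↔ (c1 ≤ c ∧ c < c1 + g) := by
    intro c
    rw [hchar0 c, hgcard]
  have hbij : ∑ t ∈ (finite_SM n k M).toFinset.filter (fun t => flat i t = u),
      betaP ^ excess n (rowShape k) t * xwt n (rowShape k) t
      = ∑ pr ∈ ((Finset.range (g + 1)) ×ˢ (Finset.range 2)).filter (fun pr => pr.1 + pr.2 ≤ g),
        cmon n k i u *
          (betaP ^ pr.2 * ((X i : KPoly) ^ (pr.1 + pr.2) * (X (i + 1) : KPoly) ^ (g - pr.1))) := by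
    apply Finset.sum_nbij'
      (i := fun t => (((Finset.range k).filter (fun c => i ∈ t 0 c ∧ (i + 1) ∉ t 0 c)).card,
        ((Finset.range k).filter (fun c => i ∈ t 0 c ∧ (i + 1) ∈ t 0 c)).card))
      (j := fun pr => unflat i u c1 g pr.1 pr.2)
    · intro t ht
      rw [Finset.mem_filter, Set.Finite.mem_toFinset] at ht
      obtain ⟨htSM, hft⟩ := ht
      obtain ⟨a, e, he1, hae, -, ha', he'⟩ :=
        fiber_structure hn huSVT hT hchar hgcard htSM.1 hft
      rw [ha', he']
      simp only [Finset.mem_filter, Finset.mem_product, Finset.mem_range]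
      omega
    · rintro ⟨a, e⟩ hpr
      simp only [Finset.mem_filter, Finset.mem_product, Finset.mem_range] at hpr
      obtain ⟨⟨-, he2⟩, hae⟩ := hpr
      have he1 : e ≤ 1 := by omega
      rw [Finset.mem_filter, Set.Finite.mem_toFinset]
      refine ⟨⟨unflat_isSVT huSVT hT hchar hae he1 hi1 hin, ?_⟩,
        flat_unflat huSVT hT hchar hae he1⟩
      intro c x hx
      rcases mem_unflat.mp hx with ⟨-, (heq | ⟨hm, -⟩)⟩ | ⟨-, (heq | hm)⟩ | ⟨-, -, hm⟩
      · omega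
      · exact hub c x hm
      · omega
      · exact hub c x hm
      · exact hub c x hm
    · intro t ht
      rw [Finset.mem_filter, Set.Finite.mem_toFinset] at ht
      obtain ⟨htSM, hft⟩ := ht
      obtain ⟨a, e, he1, hae, hteq, ha', he'⟩ :=
        fiber_structure hn huSVT hT hchar hgcard htSM.1 hft
      rw [ha', he', ← hteq]
    · rintro ⟨a, e⟩ hpr
      simp only [Finset.mem_filter, Finset.mem_product, Finset.mem_range] at hpr
      obtain ⟨⟨-, he2⟩, hae⟩ := hpr
      have he1 : e ≤ 1 := by omega
      rw [unflat_aOf huSVT hT hchar hae he1, unflat_eOf huSVT hT hchar hae he1]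
    · intro t ht
      rw [Finset.mem_filter, Set.Finite.mem_toFinset] at ht
      obtain ⟨htSM, hft⟩ := ht
      obtain ⟨a, e, he1, hae, hteq, ha', he'⟩ :=
        fiber_structure hn huSVT hT hchar hgcard htSM.1 hft
      rw [ha', he']
      rw [hteq]
      rw [excess_unflat huSVT hT hchar hae he1 hn,
        xwt_split i hi1 hin, wt_unflat_i huSVT hT hchar hae he1 hn,
        wt_unflat_succ huSVT hT hchar hae he1 hn]
      have hprod : ∏ j ∈ ((Finset.Icc 1 n).erase i).erase (i + 1),
          (X j : KPoly) ^ wt n (rowShape k) (unflat i u c1 g a e) j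
          = ∏ j ∈ ((Finset.Icc 1 n).erase i).erase (i + 1),
            (X j : KPoly) ^ wt n (rowShape k) u j := by
        apply Finset.prod_congr rfl
        intro j hj
        have hj1 := (Finset.mem_erase.mp hj).1
        have hj2 := (Finset.mem_erase.mp (Finset.mem_erase.mp hj).2).1
        rw [wt_unflat_other huSVT hT hchar hae he1 hn hj2 hj1]
      rw [hprod]
      unfold cmon
      rw [pow_add]
      ring
  rw [hbij, ← Finset.mul_sum, Ig_sum]

lemma charSet_SM_eq {i M : ℕ} (hn : 0 < n) (hi1 : 1 ≤ i) (hin : i < n) (hiM : i + 1 ≤ M) :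
    charSet n (rowShape k) (SM n k M) =
      ∑ u ∈ (finite_SM n k M).toFinset.filter (fun u => ∀ c, (i + 1) ∉ u 0 c),
        cmon n k i u * Gp i (wt n (rowShape k) u i) := by
  rw [charSet_eq_sum (finite_SM n k M)]
  have hmaps : ∀ t ∈ (finite_SM n k M).toFinset, flat i t ∈
      (finite_SM n k M).toFinset.filter (fun u => ∀ c, (i + 1) ∉ u 0 c) := by
    intro t ht
    rw [Set.Finite.mem_toFinset] at ht
    rw [Finset.mem_filter, Set.Finite.mem_toFinset]
    refine ⟨⟨flat_isSVT ht.1 hi1 hin, ?_⟩, fun c => succ_not_mem_flat⟩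
    intro c x hx
    rcases mem_flat.mp hx with ⟨hm, -⟩ | ⟨heq, -⟩
    · exact ht.2 c x hm
    · omega
  rw [← Finset.sum_fiberwise_of_maps_to hmaps
    (fun t => betaP ^ excess n (rowShape k) t * xwt n (rowShape k) t)]
  apply Finset.sum_congr rfl
  intro u hu
  exact fiber_sum hn hi1 hin hiM hu

end FiberSum


section DLStep

variable {n k : ℕ}

lemma Tfinset_eq {m : ℕ} :
    (finite_SM n k (m + 1)).toFinset.filter (fun u => ∀ c, (m + 1) ∉ u 0 c)
      = (finite_SM n k m).toFinset := by
  ext u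
  rw [Finset.mem_filter, Set.Finite.mem_toFinset, Set.Finite.mem_toFinset]
  constructor
  · rintro ⟨⟨hsvt, hb⟩, hT⟩
    refine ⟨hsvt, fun c x hx => ?_⟩
    have h1 := hb c x hx
    have h2 : x ≠ m + 1 := fun hcon => hT c (hcon ▸ hx)
    omega
  · rintro ⟨hsvt, hb⟩
    refine ⟨⟨hsvt, fun c x hx => by have := hb c x hx; omega⟩, fun c hcon => ?_⟩
    have := hb c (m + 1) hcon
    omega

lemma charSet_SM_direct (hn : 0 < n) {m : ℕ} (hm1 : 1 ≤ m) (hmn : m < n) :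
    charSet n (rowShape k) (SM n k m) =
      ∑ u ∈ (finite_SM n k m).toFinset,
        cmon n k m u * (X m : KPoly) ^ wt n (rowShape k) u m := by
  rw [charSet_eq_sum (finite_SM n k m)]
  apply Finset.sum_congr rfl
  intro u hu
  rw [Set.Finite.mem_toFinset] at hu
  have hwt0 : wt n (rowShape k) u (m + 1) = 0 :=
    wt_zero_of_none hn (fun r c hr => hu.1.rowEmpty c hr)
      (fun c hcon => by have := hu.2 c (m + 1) hcon; omega)
  rw [xwt_split m hm1 hmn u, hwt0, pow_zero]
  unfold cmon
  ring

lemma bridging (hn : 0 < n) {m : ℕ} (hm1 : 1 ≤ m) (hmn : m < n) :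
    ((X m : KPoly) - X (m + 1)) * charSet n (rowShape k) (SM n k (m + 1)) =
      DLnum m (charSet n (rowShape k) (SM n k m)) := by
  rw [charSet_SM_eq hn hm1 hmn (le_refl (m + 1)), Tfinset_eq]
  unfold DLnum
  rw [charSet_SM_direct hn hm1 hmn]
  have hren : rename (Equiv.swap m (m + 1))
      (∑ u ∈ (finite_SM n k m).toFinset,
        cmon n k m u * (X m : KPoly) ^ wt n (rowShape k) u m)
      = ∑ u ∈ (finite_SM n k m).toFinset,
        cmon n k m u * (X (m + 1) : KPoly) ^ wt n (rowShape k) u m := by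
    rw [map_sum]
    apply Finset.sum_congr rfl
    intro u _
    rw [map_mul, rename_cmon, map_pow, rename_X, Equiv.swap_apply_left]
  rw [hren, Finset.mul_sum, Finset.mul_sum, Finset.mul_sum, ← Finset.sum_sub_distrib]
  apply Finset.sum_congr rfl
  intro u _
  linear_combination (cmon n k m u) * G_identity m (wt n (rowShape k) u m)

lemma rename_charSM_of_le (hn : 0 < n) {i m : ℕ} (hi1 : 1 ≤ i) (hin : i < n)
    (hiM : i + 1 ≤ m) :
    rename (Equiv.swap i (i + 1)) (charSet n (rowShape k) (SM n k m)) =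
      charSet n (rowShape k) (SM n k m) := by
  rw [charSet_SM_eq hn hi1 hin hiM, map_sum]
  apply Finset.sum_congr rfl
  intro u _
  rw [map_mul, rename_cmon, rename_Gp]

lemma rename_charSM_of_gt (hn : 0 < n) {i m : ℕ} (him : m < i) :
    rename (Equiv.swap i (i + 1)) (charSet n (rowShape k) (SM n k m)) =
      charSet n (rowShape k) (SM n k m) := by
  rw [charSet_eq_sum (finite_SM n k m), map_sum]
  apply Finset.sum_congr rfl
  intro u hu
  rw [Set.Finite.mem_toFinset] at hu
  rw [map_mul, map_pow, rename_betaP]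
  congr 1
  unfold xwt
  rw [map_prod]
  apply Finset.prod_congr rfl
  intro j hj
  rw [map_pow, rename_X]
  by_cases hjm : j ≤ m
  · rw [Equiv.swap_apply_of_ne_of_ne (by omega) (by omega)]
  · rw [wt_zero_of_none hn (fun r c hr => hu.1.rowEmpty c hr)
      (fun c hcon => by have := hu.2 c j hcon; omega), pow_zero, pow_zero]

lemma DL_char_step {DL : ℕ → KPoly → KPoly} (hDL : IsDLOp n DL) (hn : 0 < n)
    {i m : ℕ} (hi1 : 1 ≤ i) (hin : i < n) (hm1 : 1 ≤ m) (hmn : m ≤ n) (hne : i + 1 ≠ m) :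
    DL i (charSet n (rowShape k) (SM n k m)) =
      charSet n (rowShape k) (SM n k (Equiv.swap i (i + 1) m)) := by
  have hcancel := hDL i hi1 hin (charSet n (rowShape k) (SM n k m))
  by_cases hcase : i = m
  · subst hcase
    rw [Equiv.swap_apply_left]
    apply mul_left_cancel₀ (X_sub_X_ne i)
    rw [hcancel, bridging hn hi1 hin]
  · have hswap : Equiv.swap i (i + 1) m = m :=
      Equiv.swap_apply_of_ne_of_ne (fun h => hcase h.symm) (fun h => hne h.symm)
    rw [hswap]
    apply mul_left_cancel₀ (X_sub_X_ne i)
    rw [hcancel]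
    unfold DLnum
    have hren : rename (Equiv.swap i (i + 1)) (charSet n (rowShape k) (SM n k m)) =
        charSet n (rowShape k) (SM n k m) := by
      rcases Nat.lt_or_ge i m with h | h
      · exact rename_charSM_of_le hn hi1 hin (by omega)
      · exact rename_charSM_of_gt hn (by omega)
    rw [hren]
    ring

lemma charSet_SM_one (hn : 0 < n) (hk : 1 ≤ k) :
    charSet n (rowShape k) (SM n k 1) = (X 1 : KPoly) ^ k := by
  rw [charSet_eq_sum (finite_SM n k 1)]
  have hset : (finite_SM n k 1).toFinset = {uTab (rowShape k)} := by
    apply Finset.ext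
    intro t
    rw [Set.Finite.mem_toFinset, SM_one hn, Finset.mem_singleton, Set.mem_singleton_iff]
  rw [hset, Finset.sum_singleton]
  have hrow : ∀ r c, r ≠ 0 → uTab (rowShape k) r c = ∅ := by
    intro r c hr
    rw [uTab, if_neg]
    rw [rowShape_ne k hr]
    omega
  have hbox : ∀ c, c < k → uTab (rowShape k) 0 c = {1} := by
    intro c hc
    rw [uTab, if_pos]
    rw [rowShape_zero]
    exact hc
  have hexc : excess n (rowShape k) (uTab (rowShape k)) = 0 := by
    rw [excess_eq hn hrow]
    apply Finset.sum_eq_zero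
    intro c hc
    rw [hbox c (Finset.mem_range.mp hc)]
    simp
  have hwt1 : wt n (rowShape k) (uTab (rowShape k)) 1 = k := by
    rw [wt_eq hn hrow]
    rw [show (Finset.range k).filter (fun c => 1 ∈ uTab (rowShape k) 0 c) = Finset.range k from ?_]
    · exact Finset.card_range k
    · apply Finset.filter_true_of_mem
      intro c hc
      rw [hbox c (Finset.mem_range.mp hc)]
      exact Finset.mem_singleton_self 1
  have hwtj : ∀ j, j ≠ 1 → wt n (rowShape k) (uTab (rowShape k)) j = 0 := by
    intro j hj
    apply wt_zero_of_none hn hrow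
    intro c hcon
    by_cases hc : c < k
    · rw [hbox c hc, Finset.mem_singleton] at hcon
      exact hj hcon
    · rw [uTab, if_neg (by rw [rowShape_zero]; exact hc)] at hcon
      exact Finset.notMem_empty _ hcon
  rw [hexc, pow_zero, one_mul]
  unfold xwt
  rw [Finset.prod_eq_single_of_mem 1 (Finset.mem_Icc.mpr ⟨le_refl 1, hn⟩)]
  · rw [hwt1]
  · intro j _ hne
    rw [hwtj j hne, pow_zero]

lemma main_one (hn : 2 ≤ n) (hk : 1 ≤ k) (DL : ℕ → KPoly → KPoly) (hDL : IsDLOp n DL) :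
    ∀ (word : List ℕ) (w : Equiv.Perm ℕ), IsReducedWord n w word →
      applyDL DL word ((X 1 : KPoly) ^ k) =
        charSet n (rowShape k) (SM n k (wordPerm word 1)) := by
  intro word
  induction word with
  | nil =>
    intro w hred
    have hval : wordPerm ([] : List ℕ) 1 = 1 := by rw [wordPerm_nil]; rfl
    rw [hval]
    exact (charSet_SM_one (by omega) hk).symm
  | cons j rest ih =>
    intro w hred
    have hj := hred.1 j (List.mem_cons_self)
    have hrest := reduced_tail hred
    have hne := key_no_descent (by omega : 1 ≤ n) hred
    have hm'Icc := perm_mem_Icc (fun a ha => hred.1 a (List.mem_cons_of_mem _ ha)) 1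
      (Finset.mem_Icc.mpr ⟨le_refl 1, by omega⟩)
    rw [Finset.mem_Icc] at hm'Icc
    have hval : wordPerm (j :: rest) 1 = Equiv.swap j (j + 1) (wordPerm rest 1) := by
      rw [wordPerm_cons]; rfl
    show DL j (applyDL DL rest ((X 1 : KPoly) ^ k)) = _
    rw [ih _ hrest, hval]
    exact DL_char_step hDL (by omega) hj.1 hj.2 hm'Icc.1 hm'Icc.2 hne

end DLStep


/-- for the one-row shape `(k)`, the β-character of the K-Demazure
crystal of any reduced word `(i₁,…,iℓ)` of `w ∈ Sₙ` is the Lascoux polynomial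
`ϖ_{i₁} ⋯ ϖ_{iℓ}(x₁ᵏ)`.  In particular, for any reduced word of the longest element `w₀`,
the K-Demazure crystal is all of `SVT^n((k))` and `ϖ_{w₀}(x₁ᵏ) = 𝔊_{(k)}(x₁,…,xₙ;β)`. -/
theorem kdem_row_character (n k : ℕ) (hn : 2 ≤ n) (hk : 1 ≤ k)
    (DL : ℕ → KPoly → KPoly) (hDL : IsDLOp n DL) :
    (∀ (w : Equiv.Perm ℕ) (word : List ℕ), IsReducedWord n w word →
      charSet n (rowShape k) (KDem n (rowShape k) (eK n (rowShape k)) word) =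
        applyDL DL word ((MvPolynomial.X 1 : KPoly) ^ k)) ∧
    (∀ word0 : List ℕ, IsReducedWord n (wordPerm word0) word0 →
      (∀ x, 1 ≤ x → x ≤ n → wordPerm word0 x = n + 1 - x) →
      KDem n (rowShape k) (eK n (rowShape k)) word0 = {t | IsSVT n (rowShape k) t} ∧
      applyDL DL word0 ((MvPolynomial.X 1 : KPoly) ^ k) = Groth n (rowShape k)) := by
  constructor
  · intro w word hred
    rw [KDem_eq_SM hn hk word w hred]
    exact (main_one hn hk DL hDL word w hred).symm
  · intro word0 hred hw0
    have hval : wordPerm word0 1 = n := by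
      have := hw0 1 (le_refl 1) (by omega)
      omega
    constructor
    · rw [KDem_eq_SM hn hk word0 _ hred, hval, SM_top]
    · rw [main_one hn hk DL hDL word0 _ hred, hval]
      unfold Groth
      rw [SM_top]

end SVTCrystal

end
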